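/- arXiv:1506.02829 — 8 statements merged into one kernel-verified Lean document; each statement's English description precedes it below -/
import Mathlib

section
/- The number of plane partitions of k fitting inside a 2 × a rectangle (i.e., plane partitions with at most 2 rows and at most a columns) equals the number of coloured partitions of k with parts in {1, 2, 2̄, 3, 3̄, ..., a, ā, (a+1)} where sizes 2 through a come in two colours each and sizes 1 and a+1 in one colour each. -/
/-!
Induct on the number of columns. For a two-row plane partition `π` with columns `0, …, a`, let
`gap m = π.top m - π.bot m` and `M m = min (π.top a, gap m, …, gap a)`. Replacing the rows by
`π.top m - M (m + 1)` and `π.bot m - (π.top a - M m)` (for `m < a`) leaves a plane partition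
with `a` columns and lowers the total by `s * (a + 1) + t * (a + 2)`, where `s = M 0` and
`t = π.top a - M 0`. As `M` is recovered from the prefix minima of the gaps of the smaller
partition, this is a bijection onto triples `(s, t, ρ)`. On the coloured side, removing the parts
`(a + 1)̄` and `a + 2` is the matching bijection: both families have generating function
`∏_{j = 1}^{a} 1 / ((1 - q^j) (1 - q^(j+1)))`.
-/

/-- Number of plane partitions of `k` fitting inside a `2 × a` rectangle:
`2 × a` arrays of nonnegative integers, weakly decreasing along rows and
columns, with total sum `k`. -/
noncomputable def planePartitionCount (a k : ℕ) : ℕ :=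
  Nat.card {f : Fin 2 → Fin a → ℕ //
    (∀ i : Fin 2, ∀ j j' : Fin a, j ≤ j' → f i j' ≤ f i j) ∧
    (∀ j : Fin a, f 1 j ≤ f 0 j) ∧
    ∑ i, ∑ j, f i j = k}

/-- Number of coloured partitions of `k` with parts in
`{1, 2, 2̄, …, a, ā, a+1}`: sizes `2,…,a` in two colours, sizes `1` and `a+1`
in one colour each. -/
noncomputable def colouredCount (a k : ℕ) : ℕ :=
  Nat.card {p : (ℕ → ℕ) × (ℕ → ℕ) //
    (∀ j, ¬(1 ≤ j ∧ j ≤ a + 1) → p.1 j = 0) ∧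
    (∀ j, ¬(2 ≤ j ∧ j ≤ a) → p.2 j = 0) ∧
    ∑ j ∈ Finset.range (a + 2), j * (p.1 j + p.2 j) = k}

open Finset

theorem sum_range_add_telescope {f g h : ℕ → ℕ} (n : ℕ)
    (hstep : ∀ m < n, g m + f (m + 1) = h m + f m) :
    ∑ m ∈ range n, g m + f n = ∑ m ∈ range n, h m + f 0 := by
  induction n with
  | zero => simp
  | succ n ih =>
    rw [sum_range_succ, sum_range_succ]
    have := ih fun m hm => hstep m (by omega)
    have := hstep n (by omega)
    omega

def extendByZero {a : ℕ} (g : Fin a → ℕ) (m : ℕ) : ℕ := if h : m < a then g ⟨m, h⟩ else 0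

section ExtendByZero

variable {a : ℕ}

theorem extendByZero_val (g : Fin a → ℕ) (j : Fin a) : extendByZero g j = g j := dif_pos j.isLt

theorem extendByZero_of_le (g : Fin a → ℕ) {m : ℕ} (h : a ≤ m) : extendByZero g m = 0 :=
  dif_neg (by omega)

theorem extendByZero_comp_val {f : ℕ → ℕ} (hf : ∀ m, a ≤ m → f m = 0) :
    extendByZero (fun j : Fin a => f j) = f := by
  funext m
  by_cases h : m < a
  · exact dif_pos h
  · rw [extendByZero_of_le _ (not_lt.1 h), hf m (not_lt.1 h)]

theorem antitone_extendByZero {g : Fin a → ℕ} (hg : Antitone g) : Antitone (extendByZero g) := by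
  intro m n hmn
  by_cases hn : n < a
  · rw [extendByZero, dif_pos hn, extendByZero, dif_pos (by omega)]
    exact hg (Fin.mk_le_mk.2 hmn)
  · rw [extendByZero_of_le g (not_lt.1 hn)]
    exact Nat.zero_le _

theorem extendByZero_le_extendByZero {g g' : Fin a → ℕ} (h : ∀ j, g j ≤ g' j) (m : ℕ) :
    extendByZero g m ≤ extendByZero g' m := by
  unfold extendByZero
  split_ifs
  exacts [h _, le_rfl]

theorem sum_range_extendByZero (g : Fin a → ℕ) : ∑ m ∈ range a, extendByZero g m = ∑ j, g j := by
  rw [← Fin.sum_univ_eq_sum_range]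
  simp only [extendByZero_val]

end ExtendByZero

@[ext]
structure TwoRowPlanePartition (a : ℕ) where
  top : ℕ → ℕ
  bot : ℕ → ℕ
  antitone_top : Antitone top
  antitone_bot : Antitone bot
  bot_le_top : ∀ m, bot m ≤ top m
  top_eq_zero : ∀ m, a ≤ m → top m = 0

namespace TwoRowPlanePartition

variable {a : ℕ}

def weight (π : TwoRowPlanePartition a) : ℕ := ∑ m ∈ range a, (π.top m + π.bot m)

def gap (π : TwoRowPlanePartition a) (m : ℕ) : ℕ := π.top m - π.bot m

theorem bot_add_gap (π : TwoRowPlanePartition a) (m : ℕ) : π.bot m + π.gap m = π.top m :=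
  Nat.add_sub_of_le (π.bot_le_top m)

theorem bot_eq_zero (π : TwoRowPlanePartition a) {m : ℕ} (h : a ≤ m) : π.bot m = 0 :=
  Nat.le_zero.1 ((π.bot_le_top m).trans_eq (π.top_eq_zero m h))

instance : Unique (TwoRowPlanePartition 0) where
  default := ⟨0, 0, antitone_const, antitone_const, fun _ => le_rfl, fun _ _ => rfl⟩
  uniq π := by
    ext m
    · exact π.top_eq_zero m m.zero_le
    · exact π.bot_eq_zero m.zero_le

def ofArray (f : Fin 2 → Fin a → ℕ) (hrow : ∀ i, Antitone (f i)) (hcol : ∀ j, f 1 j ≤ f 0 j) :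
    TwoRowPlanePartition a where
  top := extendByZero (f 0)
  bot := extendByZero (f 1)
  antitone_top := antitone_extendByZero (hrow 0)
  antitone_bot := antitone_extendByZero (hrow 1)
  bot_le_top := extendByZero_le_extendByZero hcol
  top_eq_zero _ := extendByZero_of_le _

theorem weight_ofArray (f : Fin 2 → Fin a → ℕ) (hrow : ∀ i, Antitone (f i))
    (hcol : ∀ j, f 1 j ≤ f 0 j) : (ofArray f hrow hcol).weight = ∑ i, ∑ j, f i j := by
  rw [Fin.sum_univ_two, weight, sum_add_distrib]
  simp only [ofArray, sum_range_extendByZero]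

theorem weight_eq_sum_array (π : TwoRowPlanePartition a) :
    π.weight = ∑ i, ∑ j : Fin a, ![π.top j, π.bot j] i := by
  rw [Fin.sum_univ_two, weight, sum_add_distrib]
  simp only [Matrix.cons_val_zero, Matrix.cons_val_one,
    Fin.sum_univ_eq_sum_range π.top, Fin.sum_univ_eq_sum_range π.bot]

theorem planePartitionCount_eq_card (a k : ℕ) :
    planePartitionCount a k = Nat.card {π : TwoRowPlanePartition a // π.weight = k} :=
  Nat.card_congr
    { toFun := fun f => ⟨ofArray f.1 f.2.1 f.2.2.1, (weight_ofArray ..).trans f.2.2.2⟩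
      invFun := fun π => ⟨fun i j => ![π.1.top j, π.1.bot j] i,
        Fin.forall_fin_two.2 ⟨fun _ _ h => π.1.antitone_top h, fun _ _ h => π.1.antitone_bot h⟩,
        fun j => π.1.bot_le_top j, (weight_eq_sum_array π.1).symm.trans π.2⟩
      left_inv := fun f => by
        ext i j
        fin_cases i <;> simp [ofArray, extendByZero_val]
      right_inv := fun π => Subtype.ext <| TwoRowPlanePartition.ext
        (extendByZero_comp_val π.1.top_eq_zero) (extendByZero_comp_val fun _ => π.1.bot_eq_zero) }

section Peel

variable (π : TwoRowPlanePartition (a + 1))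

def tailMin (m : ℕ) : ℕ := (Ico m (a + 1)).fold min (π.top a) π.gap

theorem tailMin_of_lt {m : ℕ} (h : a < m) : π.tailMin m = π.top a := by
  rw [tailMin, Ico_eq_empty_of_le h, fold_empty]

theorem tailMin_of_le {m : ℕ} (h : m ≤ a) : π.tailMin m = min (π.gap m) (π.tailMin (m + 1)) := by
  rw [tailMin, tailMin, ← insert_Ico_add_one_left_eq_Ico (show m < a + 1 by omega),
    fold_insert (by simp)]

theorem tailMin_le_top (m : ℕ) : π.tailMin m ≤ π.top a :=
  (fold_min_le _).2 (Or.inl le_rfl)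

theorem tailMin_le_gap {m : ℕ} (h : m ≤ a) : π.tailMin m ≤ π.gap m :=
  (fold_min_le _).2 (Or.inr ⟨m, mem_Ico.2 ⟨le_rfl, by omega⟩, le_rfl⟩)

theorem tailMin_le_succ (m : ℕ) : π.tailMin m ≤ π.tailMin (m + 1) := by
  rcases le_or_gt m a with h | h
  · rw [π.tailMin_of_le h]; exact min_le_right _ _
  · rw [π.tailMin_of_lt h, π.tailMin_of_lt (by omega)]

theorem tailMin_monotone : Monotone π.tailMin := monotone_nat_of_le_succ π.tailMin_le_succ

theorem top_le_bot_add_tailMin (m : ℕ) : π.top a ≤ π.bot m + π.tailMin m := by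
  suffices π.top a - π.bot m ≤ π.tailMin m by omega
  refine (le_fold_min _).2 ⟨Nat.sub_le _ _, fun j hj => ?_⟩
  rw [mem_Ico] at hj
  have := π.antitone_top (show j ≤ a by omega)
  have := π.antitone_bot hj.1
  have := π.bot_add_gap j
  omega

theorem bot_add_tailMin_succ_le (m : ℕ) :
    π.bot (m + 1) + π.tailMin (m + 1) ≤ π.bot m + π.tailMin m := by
  rcases lt_trichotomy m a with h | rfl | h
  · have := π.tailMin_of_le h.le
    have := π.tailMin_le_gap (show m + 1 ≤ a by omega)
    have := π.bot_add_gap m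
    have := π.bot_add_gap (m + 1)
    have := π.antitone_top (m.le_add_right 1)
    have := π.antitone_bot (m.le_add_right 1)
    omega
  · have := π.tailMin_of_le le_rfl
    have := π.tailMin_of_lt (show m < m + 1 by omega)
    have := π.bot_eq_zero (le_refl (m + 1))
    have := π.bot_add_gap m
    have := π.tailMin_le_top m
    omega
  · rw [π.tailMin_of_lt h, π.tailMin_of_lt (by omega), π.bot_eq_zero (by omega),
      π.bot_eq_zero (by omega)]

def peel : TwoRowPlanePartition a where
  top m := π.top m - π.tailMin (m + 1)
  bot m := π.bot m - (π.top a - π.tailMin m)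
  antitone_top := antitone_nat_of_succ_le fun m => by
    have := π.antitone_top (m.le_add_right 1)
    have := π.tailMin_le_succ (m + 1)
    omega
  antitone_bot := antitone_nat_of_succ_le fun m => by
    have := π.bot_add_tailMin_succ_le m
    have := π.tailMin_le_top m
    have := π.tailMin_le_top (m + 1)
    omega
  bot_le_top m := by
    rcases le_or_gt m a with h | h
    · have := π.tailMin_le_gap h
      have := π.bot_add_gap m
      have := π.tailMin_le_top (m + 1)
      have := π.antitone_top h
      omega
    · have := π.top_eq_zero m h
      have := π.bot_le_top m
      omega
  top_eq_zero m h := by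
    have := π.antitone_top h
    rw [π.tailMin_of_lt (show a < m + 1 by omega)]
    omega

theorem peel_top (m : ℕ) : π.peel.top m = π.top m - π.tailMin (m + 1) := rfl

theorem peel_bot (m : ℕ) : π.peel.bot m = π.bot m - (π.top a - π.tailMin m) := rfl

end Peel

section Glue

variable (ρ : TwoRowPlanePartition a) (s t : ℕ)

def headMin (m : ℕ) : ℕ := (range m).fold min t ρ.gap

theorem headMin_zero : ρ.headMin t 0 = t := rfl

theorem headMin_succ (m : ℕ) : ρ.headMin t (m + 1) = min (ρ.gap m) (ρ.headMin t m) := by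
  rw [headMin, headMin, range_add_one, fold_insert notMem_range_self]

theorem headMin_le (m : ℕ) : ρ.headMin t m ≤ t :=
  (fold_min_le _).2 (Or.inl le_rfl)

theorem headMin_succ_le_gap (m : ℕ) : ρ.headMin t (m + 1) ≤ ρ.gap m := by
  rw [headMin_succ]; exact min_le_left _ _

theorem headMin_succ_le (m : ℕ) : ρ.headMin t (m + 1) ≤ ρ.headMin t m := by
  rw [headMin_succ]; exact min_le_right _ _

theorem headMin_of_lt {m : ℕ} (h : a < m) : ρ.headMin t m = 0 := by
  have hgap : ρ.gap a = 0 := by rw [gap, ρ.top_eq_zero a le_rfl, Nat.zero_sub]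
  exact Nat.eq_zero_of_le_zero ((fold_min_le _).2 (Or.inr ⟨a, mem_range.2 h, hgap.le⟩))

def glue : TwoRowPlanePartition (a + 1) where
  top m := if m ≤ a then ρ.top m + (t - ρ.headMin t (m + 1)) + s else 0
  bot m := ρ.bot m + ρ.headMin t m
  antitone_top := antitone_nat_of_succ_le fun m => by
    by_cases h : m + 1 ≤ a
    · rw [if_pos h, if_pos (by omega)]
      have := ρ.headMin_succ t (m + 1)
      have := ρ.headMin_succ_le_gap t m
      have := ρ.headMin_le t (m + 1)
      have := ρ.bot_add_gap m
      have := ρ.bot_add_gap (m + 1)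
      have := ρ.antitone_top (m.le_add_right 1)
      have := ρ.antitone_bot (m.le_add_right 1)
      omega
    · rw [if_neg h]; exact Nat.zero_le _
  antitone_bot := antitone_nat_of_succ_le fun m => by
    have := ρ.headMin_succ_le t m
    have := ρ.antitone_bot (m.le_add_right 1)
    omega
  bot_le_top m := by
    by_cases h : m ≤ a
    · rw [if_pos h]
      have := ρ.headMin_succ_le_gap t m
      have := ρ.bot_add_gap m
      have := ρ.headMin_le t m
      omega
    · rw [if_neg h, ρ.bot_eq_zero (by omega), ρ.headMin_of_lt t (by omega)]
  top_eq_zero m h := if_neg (by omega)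

theorem glue_top_of_le {m : ℕ} (h : m ≤ a) :
    (glue ρ s t).top m = ρ.top m + (t - ρ.headMin t (m + 1)) + s := if_pos h

theorem glue_bot (m : ℕ) : (glue ρ s t).bot m = ρ.bot m + ρ.headMin t m := rfl

theorem glue_top_last : (glue ρ s t).top a = s + t := by
  rw [glue_top_of_le ρ s t le_rfl, ρ.top_eq_zero a le_rfl, ρ.headMin_of_lt t (by omega)]
  omega

theorem tailMin_glue (m : ℕ) : (glue ρ s t).tailMin m = s + (t - ρ.headMin t m) := by
  induction m using Nat.strong_decreasing_induction with
  | base => exact ⟨a, fun m hm => by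
      rw [tailMin_of_lt _ hm, glue_top_last, ρ.headMin_of_lt t hm]; omega⟩
  | step m ih =>
    rcases le_or_gt m a with h | h
    · rw [tailMin_of_le _ h, ih (m + 1) (by omega), gap, glue_top_of_le ρ s t h, glue_bot]
      have := ρ.headMin_succ t m
      have := ρ.headMin_le t m
      have := ρ.bot_add_gap m
      omega
    · rw [tailMin_of_lt _ h, glue_top_last, ρ.headMin_of_lt t h]; omega

theorem weight_glue : (glue ρ s t).weight = s * (a + 1) + t * (a + 2) + ρ.weight := by
  have telescope := sum_range_add_telescope (f := ρ.headMin t)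
    (g := fun m => (glue ρ s t).top m + (glue ρ s t).bot m)
    (h := fun m => ρ.top m + ρ.bot m + (s + t)) a fun m hm => by
      simp only [glue_top_of_le ρ s t hm.le, glue_bot]
      have := ρ.headMin_le t (m + 1)
      omega
  rw [sum_add_distrib (g := fun _ => s + t), sum_const, card_range, smul_eq_mul,
    headMin_zero] at telescope
  rw [weight, sum_range_succ, glue_top_last, glue_bot, ρ.bot_eq_zero le_rfl, weight]
  linear_combination telescope

end Glue

theorem peel_glue (ρ : TwoRowPlanePartition a) (s t : ℕ) : (glue ρ s t).peel = ρ := by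
  ext m
  · rw [peel_top, tailMin_glue]
    rcases le_or_gt m a with h | h
    · rw [glue_top_of_le ρ s t h]; omega
    · rw [(glue ρ s t).top_eq_zero m (by omega), ρ.top_eq_zero m h.le, Nat.zero_sub]
  · rw [peel_bot, tailMin_glue, glue_top_last, glue_bot]
    have := ρ.headMin_le t m
    omega

theorem headMin_peel (π : TwoRowPlanePartition (a + 1)) (m : ℕ) :
    π.peel.headMin (π.top a - π.tailMin 0) m = π.top a - π.tailMin m := by
  induction m with
  | zero => rfl
  | succ m ih =>
    rw [headMin_succ, ih, gap, peel_top, peel_bot]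
    have := π.top_le_bot_add_tailMin m
    have := π.tailMin_le_top m
    have := π.tailMin_le_top (m + 1)
    rcases le_or_gt m a with h | h
    · have := π.tailMin_of_le h
      have := π.bot_add_gap m
      have := π.antitone_top h
      omega
    · rw [π.tailMin_of_lt h, π.tailMin_of_lt (by omega)]
      omega

theorem glue_peel (π : TwoRowPlanePartition (a + 1)) :
    glue π.peel (π.tailMin 0) (π.top a - π.tailMin 0) = π := by
  ext m
  · rcases le_or_gt m a with h | h
    · rw [glue_top_of_le _ _ _ h, headMin_peel, peel_top]
      have := π.tailMin_monotone (Nat.zero_le (m + 1))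
      have := π.tailMin_le_top (m + 1)
      have := π.antitone_top h
      omega
    · rw [(glue _ _ _).top_eq_zero m h, π.top_eq_zero m h]
  · rw [glue_bot, headMin_peel, peel_bot]
    have := π.top_le_bot_add_tailMin m
    have := π.tailMin_le_top m
    omega

def peelEquiv : TwoRowPlanePartition (a + 1) ≃ (ℕ × ℕ) × TwoRowPlanePartition a where
  toFun π := ((π.tailMin 0, π.top a - π.tailMin 0), π.peel)
  invFun p := glue p.2 p.1.1 p.1.2
  left_inv := glue_peel
  right_inv := fun ⟨⟨s, t⟩, ρ⟩ => by
    simp only [tailMin_glue, headMin_zero, glue_top_last, peel_glue]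
    congr <;> omega

theorem weight_peelEquiv (π : TwoRowPlanePartition (a + 1)) :
    π.weight =
      (peelEquiv π).1.1 * (a + 1) + (peelEquiv π).1.2 * (a + 2) + (peelEquiv π).2.weight := by
  conv_lhs => rw [← peelEquiv.symm_apply_apply π]
  exact weight_glue ..

end TwoRowPlanePartition

/-- `plain j` and `barred j` are the multiplicities of the parts `j` and `j̄`. -/
@[ext]
structure ColouredPartition (a : ℕ) where
  plain : ℕ → ℕ
  barred : ℕ → ℕ
  plain_eq_zero : ∀ j, ¬(1 ≤ j ∧ j ≤ a + 1) → plain j = 0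
  barred_eq_zero : ∀ j, ¬(2 ≤ j ∧ j ≤ a) → barred j = 0

namespace ColouredPartition

open Function

variable {a : ℕ}

def weight (c : ColouredPartition a) : ℕ := ∑ j ∈ range (a + 2), j * (c.plain j + c.barred j)

theorem colouredCount_eq_card (a k : ℕ) :
    colouredCount a k = Nat.card {c : ColouredPartition a // c.weight = k} :=
  Nat.card_congr
    { toFun := fun p => ⟨⟨p.1.1, p.1.2, p.2.1, p.2.2.1⟩, p.2.2.2⟩
      invFun := fun c => ⟨(c.1.plain, c.1.barred), c.1.plain_eq_zero, c.1.barred_eq_zero, c.2⟩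
      left_inv := fun _ => rfl
      right_inv := fun _ => rfl }

def pairEquiv : ℕ × ℕ ≃ ColouredPartition 1 where
  toFun p :=
    { plain := fun j => if j = 1 then p.1 else if j = 2 then p.2 else 0
      barred := 0
      plain_eq_zero := fun j hj => by rw [if_neg (by omega), if_neg (by omega)]
      barred_eq_zero := fun _ _ => rfl }
  invFun c := (c.plain 1, c.plain 2)
  left_inv _ := rfl
  right_inv c := by
    ext j
    · dsimp only
      split_ifs with h1 h2
      · rw [h1]
      · rw [h2]
      · exact (c.plain_eq_zero j (by omega)).symm
    · exact (c.barred_eq_zero j (by omega)).symm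

theorem weight_pairEquiv (p : ℕ × ℕ) : (pairEquiv p).weight = p.1 + 2 * p.2 := by
  simp [weight, pairEquiv, sum_range_succ]

section Extend

variable (c : ColouredPartition (a + 1)) (s t : ℕ)

def extend : ColouredPartition (a + 2) where
  plain := update c.plain (a + 3) t
  barred := update c.barred (a + 2) s
  plain_eq_zero j hj := by
    rw [update_of_ne (by omega)]; exact c.plain_eq_zero j (by omega)
  barred_eq_zero j hj := by
    rw [update_of_ne (by omega)]; exact c.barred_eq_zero j (by omega)

theorem weight_extend : (c.extend s t).weight = s * (a + 2) + t * (a + 3) + c.weight := by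
  have hlow : ∀ j ∈ range (a + 2), j * ((c.extend s t).plain j + (c.extend s t).barred j) =
      j * (c.plain j + c.barred j) := fun j hj => by
    rw [mem_range] at hj
    simp only [extend, update_of_ne (show j ≠ a + 3 by omega),
      update_of_ne (show j ≠ a + 2 by omega)]
  have hc : c.weight =
      ∑ j ∈ range (a + 2), j * (c.plain j + c.barred j) + (a + 2) * c.plain (a + 2) := by
    rw [weight, sum_range_succ _ (a + 2), c.barred_eq_zero (a + 2) (by omega), add_zero]
  rw [hc, weight, sum_range_succ _ (a + 3), sum_range_succ _ (a + 2), sum_congr rfl hlow]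
  simp only [extend, update_self, update_of_ne (show a + 2 ≠ a + 3 by omega),
    update_of_ne (show a + 3 ≠ a + 2 by omega), c.barred_eq_zero (a + 3) (by omega)]
  ring

end Extend

def restrict (c : ColouredPartition (a + 2)) : ColouredPartition (a + 1) where
  plain := update c.plain (a + 3) 0
  barred := update c.barred (a + 2) 0
  plain_eq_zero j hj := by
    rw [update_apply]; split_ifs
    · rfl
    · exact c.plain_eq_zero j (by omega)
  barred_eq_zero j hj := by
    rw [update_apply]; split_ifs
    · rfl
    · exact c.barred_eq_zero j (by omega)

def extendEquiv : (ℕ × ℕ) × ColouredPartition (a + 1) ≃ ColouredPartition (a + 2) where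
  toFun p := p.2.extend p.1.1 p.1.2
  invFun c := ((c.barred (a + 2), c.plain (a + 3)), c.restrict)
  left_inv := fun ⟨⟨s, t⟩, c⟩ => by
    refine Prod.ext (Prod.ext (update_self ..) (update_self ..)) (ColouredPartition.ext ?_ ?_)
    · simp only [extend, restrict, update_idem, update_eq_self_iff]
      exact (c.plain_eq_zero (a + 3) (by omega)).symm
    · simp only [extend, restrict, update_idem, update_eq_self_iff]
      exact (c.barred_eq_zero (a + 2) (by omega)).symm
  right_inv c := by
    ext <;> simp [extend, restrict]

theorem weight_extendEquiv (p : (ℕ × ℕ) × ColouredPartition (a + 1)) :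
    (extendEquiv p).weight = p.1.1 * (a + 2) + p.1.2 * (a + 3) + p.2.weight :=
  weight_extend p.2 p.1.1 p.1.2

end ColouredPartition

theorem exists_weight_preserving_equiv (n : ℕ) :
    ∃ e : TwoRowPlanePartition (n + 1) ≃ ColouredPartition (n + 1),
      ∀ π, (e π).weight = π.weight := by
  induction n with
  | zero =>
    -- there is no part `1̄`, so here the peeling ends at the one-point `TwoRowPlanePartition 0`
    refine ⟨TwoRowPlanePartition.peelEquiv.trans ((Equiv.prodUnique _ _).trans
      ColouredPartition.pairEquiv), fun π => ?_⟩
    rw [Equiv.trans_apply, Equiv.trans_apply, ColouredPartition.weight_pairEquiv,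
      TwoRowPlanePartition.weight_peelEquiv π]
    simp only [Equiv.prodUnique_apply, TwoRowPlanePartition.weight, range_zero, sum_empty]
    ring
  | succ n ih =>
    obtain ⟨e, he⟩ := ih
    refine ⟨TwoRowPlanePartition.peelEquiv.trans ((Equiv.prodCongr (Equiv.refl _) e).trans
      ColouredPartition.extendEquiv), fun π => ?_⟩
    rw [Equiv.trans_apply, Equiv.trans_apply, ColouredPartition.weight_extendEquiv,
      Equiv.prodCongr_apply, Prod.map_snd, he, TwoRowPlanePartition.weight_peelEquiv π]
    rfl

theorem planePartitionCount_eq_colouredCount (a : ℕ) (ha : 1 ≤ a) (k : ℕ) :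
    planePartitionCount a k = colouredCount a k := by
  obtain ⟨n, rfl⟩ := Nat.exists_eq_add_of_le' ha
  obtain ⟨e, he⟩ := exists_weight_preserving_equiv n
  rw [TwoRowPlanePartition.planePartitionCount_eq_card, ColouredPartition.colouredCount_eq_card]
  exact Nat.card_congr (e.subtypeEquiv fun π => by rw [he])
end

section
/- The generating function for plane partitions with at most 2 rows and at most a columns (parts unbounded) is 1/((1-x)·(1-x²)²·(1-x³)²···(1-xᵃ)²·(1-x^{a+1})). -/
open PowerSeries

/-!
A plane partition with two rows and at most `a` columns is a pair `(p, q)` of partitions with at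
most `a` parts such that `q ≤ p` pointwise. Partitions with at most `b` parts have generating
function `P_b = 1 / ∏_{j ≤ b} (1 - x ^ j)`: such a partition either has fewer than `b` parts or
contains a column of height `b`. The pairs with `p j < q j` for some `j` correspond, with size
lowered by one, to pairs of partitions with at most `a + 1` and `a - 1` parts: at the first such
`j` the two lattice paths meet and one switches their tails (Lindström–Gessel–Viennot). Hence
the generating function is `P_a ^ 2 - x P_(a+1) P_(a-1)`, and multiplying it by
`∏_{j ≤ a} (1 - x ^ j) ∏_{j ≤ a + 1} (1 - x ^ j)` gives `(1 - x ^ (a+1)) - x (1 - x ^ a) = 1 - x`.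
-/

open Finset

theorem IsLeast.notMem_of_lt {α : Type*} [Preorder α] {s : Set α} {a b : α} (h : IsLeast s a)
    (hb : b < a) : b ∉ s :=
  fun hb' => (h.2 hb').not_gt hb

theorem Antitone.piecewise_range {β : Type*} [Preorder β] {f g : ℕ → β} {n : ℕ}
    (hf : Antitone f) (hg : Antitone g) (hgf : ∀ j < n, g n ≤ f j) :
    Antitone ((range n).piecewise f g) := by
  intro i j hij
  by_cases hj : j < n
  · simpa [piecewise, hj, hij.trans_lt hj] using hf hij
  · by_cases hi : i < n
    · simpa [piecewise, hj, hi] using (hg (not_lt.1 hj)).trans (hgf i hi)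
    · simpa [piecewise, hj, hi] using hg hij

theorem sum_range_piecewise_range {M : Type*} [AddCommMonoid M] (f g : ℕ → M) {n N : ℕ}
    (h : n ≤ N) :
    ∑ j ∈ range N, (range n).piecewise f g j = ∑ j ∈ range n, f j + ∑ j ∈ Ico n N, g j := by
  rw [sum_piecewise, range_inter_range, min_eq_right h]
  congr 1
  exact sum_congr (by ext; simp; omega) fun _ _ => rfl

section WeightGenFun

variable {α β : Type*}

/-- `Nat.card` is `0` on infinite fibres, hence the finiteness hypotheses below. -/
noncomputable def weightGenFun (w : α → ℕ) : ℚ⟦X⟧ :=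
  PowerSeries.mk fun k => (Nat.card {x // w x = k} : ℚ)

theorem coeff_weightGenFun (w : α → ℕ) (k : ℕ) :
    coeff k (weightGenFun w) = Nat.card {x // w x = k} :=
  coeff_mk _ _

theorem weightGenFun_congr {w : α → ℕ} {w' : β → ℕ} (e : α ≃ β) (he : ∀ x, w' (e x) = w x) :
    weightGenFun w' = weightGenFun w := by
  ext k
  simp only [coeff_weightGenFun]
  exact_mod_cast (Nat.card_congr (e.subtypeEquiv fun x => by rw [he])).symm

theorem weightGenFun_of_unique [Unique α] (w : α → ℕ) : weightGenFun w = X ^ w default := by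
  ext k
  rw [coeff_weightGenFun, coeff_X_pow]
  split_ifs with h
  · have : Unique {x // w x = k} :=
      ⟨⟨⟨default, h.symm⟩⟩, fun x => Subtype.ext (Subsingleton.elim _ _)⟩
    simp
  · have : IsEmpty {x // w x = k} := ⟨fun x => h (by rw [← x.2, Subsingleton.elim x.1 default])⟩
    simp

theorem weightGenFun_add_const (w : α → ℕ) (n : ℕ) :
    weightGenFun (fun x => w x + n) = X ^ n * weightGenFun w := by
  ext k
  rw [coeff_X_pow_mul', coeff_weightGenFun]
  split_ifs with h
  · rw [coeff_weightGenFun]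
    exact_mod_cast Nat.card_congr (Equiv.subtypeEquivRight fun x => by omega)
  · have : IsEmpty {x // w x + n = k} := ⟨fun x => h (by omega)⟩
    simp

theorem weightGenFun_eq_add_compl (w : α → ℕ) (hw : ∀ k, Finite {x // w x = k}) (p : α → Prop) :
    weightGenFun w = weightGenFun (fun x : {x // p x} => w x) +
      weightGenFun (fun x : {x // ¬ p x} => w x) := by
  classical
  ext k
  have := hw k
  simp only [map_add, coeff_weightGenFun]
  have e : ∀ q : α → Prop, {y : {x // w x = k} // q y} ≃ {y : {x // q x} // w y = k} := fun q =>
    (Equiv.subtypeSubtypeEquivSubtypeInter _ q).trans <|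
      (Equiv.subtypeEquivRight fun _ => and_comm).trans
        (Equiv.subtypeSubtypeEquivSubtypeInter q _).symm
  rw [← Nat.card_congr (e p), ← Nat.card_congr (e _), ← Nat.cast_add, ← Nat.card_sum,
    Nat.card_congr (Equiv.sumCompl _)]

def fiberProdEquiv (w₁ : α → ℕ) (w₂ : β → ℕ) (k : ℕ) :
    {x : α × β // w₁ x.1 + w₂ x.2 = k} ≃
      Σ ij : antidiagonal k, {a // w₁ a = ij.1.1} × {b // w₂ b = ij.1.2} where
  toFun x := ⟨⟨(w₁ x.1.1, w₂ x.1.2), mem_antidiagonal.2 x.2⟩, ⟨x.1.1, rfl⟩, ⟨x.1.2, rfl⟩⟩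
  invFun y := ⟨(y.2.1, y.2.2), by rw [y.2.1.2, y.2.2.2]; exact mem_antidiagonal.1 y.1.2⟩
  right_inv := by
    rintro ⟨⟨⟨i, j⟩, hij⟩, ⟨a, ha⟩, ⟨b, hb⟩⟩
    dsimp only at ha hb
    subst ha hb
    rfl

variable {w₁ : α → ℕ} {w₂ : β → ℕ}

theorem finite_fiber_prod (h₁ : ∀ k, Finite {a // w₁ a = k}) (h₂ : ∀ k, Finite {b // w₂ b = k})
    (k : ℕ) : Finite {x : α × β // w₁ x.1 + w₂ x.2 = k} :=
  Finite.of_equiv _ (fiberProdEquiv w₁ w₂ k).symm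

theorem weightGenFun_prod (h₁ : ∀ k, Finite {a // w₁ a = k}) (h₂ : ∀ k, Finite {b // w₂ b = k}) :
    weightGenFun (fun x : α × β => w₁ x.1 + w₂ x.2) = weightGenFun w₁ * weightGenFun w₂ := by
  ext k
  rw [coeff_weightGenFun, coeff_mul, Nat.card_congr (fiberProdEquiv w₁ w₂ k), Nat.card_sigma,
    ← sum_coe_sort (antidiagonal k)]
  simp [coeff_weightGenFun, Nat.card_prod]

end WeightGenFun

/-- A partition with at most `b` parts, as its sequence of parts padded with zeros. -/
@[ext]
structure BoundedPartition (b : ℕ) where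
  toFun : ℕ → ℕ
  antitone : Antitone toFun
  eq_zero_of_le : ∀ j, b ≤ j → toFun j = 0

namespace BoundedPartition

variable {b : ℕ}

instance : CoeFun (BoundedPartition b) fun _ => ℕ → ℕ := ⟨toFun⟩

def size (v : BoundedPartition b) : ℕ := ∑ j ∈ range b, v j

theorem le_size (v : BoundedPartition b) (j : ℕ) : v j ≤ v.size := by
  by_cases hj : j < b
  · exact single_le_sum (fun _ _ => Nat.zero_le _) (mem_range.2 hj)
  · simp [v.eq_zero_of_le j (not_lt.1 hj)]

theorem finite_size_eq (b k : ℕ) : Finite {v : BoundedPartition b // v.size = k} := by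
  refine Finite.of_injective (β := Fin b → Fin (k + 1))
    (fun v j => ⟨v.1 j, Nat.lt_succ_of_le ((v.1.le_size j).trans_eq v.2)⟩) fun v w h => ?_
  ext j
  by_cases hj : j < b
  · simpa using congrFun h ⟨j, hj⟩
  · simp only [v.1.eq_zero_of_le j (not_lt.1 hj), w.1.eq_zero_of_le j (not_lt.1 hj)]

instance : Unique (BoundedPartition 0) where
  default := ⟨fun _ => 0, antitone_const, fun _ _ => rfl⟩
  uniq v := by ext j; exact v.eq_zero_of_le j (Nat.zero_le j)

def castSuccEquiv (b : ℕ) : BoundedPartition b ≃ {v : BoundedPartition (b + 1) // v b = 0} where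
  toFun v := ⟨⟨v, v.antitone, fun j hj => v.eq_zero_of_le j (by omega)⟩, v.eq_zero_of_le b le_rfl⟩
  invFun v := ⟨v.1, v.1.antitone, fun j hj =>
    (eq_or_lt_of_le hj).elim (fun h => h ▸ v.2) (v.1.eq_zero_of_le j)⟩

theorem size_castSuccEquiv (v : BoundedPartition b) : (castSuccEquiv b v).1.size = v.size := by
  simp [size, castSuccEquiv, sum_range_succ, v.eq_zero_of_le b le_rfl]

def addColumnEquiv (b : ℕ) :
    BoundedPartition (b + 1) ≃ {v : BoundedPartition (b + 1) // v b ≠ 0} where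
  toFun v := ⟨⟨(range (b + 1)).piecewise (v · + 1) v,
    v.antitone.add_const 1 |>.piecewise_range v.antitone fun j _ => by
      simp [v.eq_zero_of_le (b + 1) le_rfl],
    fun j hj => by simp [piecewise, v.eq_zero_of_le j hj]; omega⟩, by simp [piecewise]⟩
  invFun v := ⟨(v.1 · - 1), fun _ _ h => Nat.sub_le_sub_right (v.1.antitone h) 1,
    fun j hj => by simp [v.1.eq_zero_of_le j hj]⟩
  left_inv v := by
    ext j
    by_cases hj : j < b + 1
    · simp [piecewise, hj]
    · simp [piecewise, hj, v.eq_zero_of_le j (not_lt.1 hj)]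
  right_inv v := by
    ext j
    by_cases hj : j < b + 1
    · have := v.1.antitone (Nat.le_of_lt_succ hj)
      have := v.2
      simp [piecewise, hj]
      omega
    · simp [piecewise, hj, v.1.eq_zero_of_le j (not_lt.1 hj)]

theorem size_addColumnEquiv (v : BoundedPartition (b + 1)) :
    (addColumnEquiv b v).1.size = v.size + (b + 1) := by
  simp [size, addColumnEquiv, sum_range_piecewise_range _ _ le_rfl, sum_add_distrib]

theorem weightGenFun_size_succ (b : ℕ) :
    weightGenFun (size : BoundedPartition (b + 1) → ℕ) =
      weightGenFun (size : BoundedPartition b → ℕ) +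
        X ^ (b + 1) * weightGenFun (size : BoundedPartition (b + 1) → ℕ) := by
  conv_lhs => rw [weightGenFun_eq_add_compl size (finite_size_eq (b + 1)) (fun v => v b = 0),
    weightGenFun_congr (castSuccEquiv b) size_castSuccEquiv,
    weightGenFun_congr (addColumnEquiv b) size_addColumnEquiv, weightGenFun_add_const]

theorem weightGenFun_size_mul_prod (b : ℕ) :
    weightGenFun (size : BoundedPartition b → ℕ) * ∏ j ∈ Icc 1 b, (1 - X ^ j) = 1 := by
  induction b with
  | zero => simp [weightGenFun_of_unique, size]
  | succ b ih =>
    rw [prod_Icc_succ_top (by omega)]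
    linear_combination (∏ j ∈ Icc 1 b, (1 - X ^ j : ℚ⟦X⟧)) * weightGenFun_size_succ b + ih

/-- The tail switch at the first index `i` where `q` exceeds `p`. The tail of `p` is shifted
right and that of `q` left, so that the numbers of parts become `b + 2` and `b`. -/
def switchTails (p q : BoundedPartition (b + 1)) (i : ℕ) (hi : IsLeast {j | p j < q j} i) :
    BoundedPartition (b + 2) × BoundedPartition b :=
  have hib : i ≤ b := by
    by_contra! h
    have : p i < q i := hi.1
    simp [q.eq_zero_of_le i h] at this
  have hle (j : ℕ) (hj : j < i) : q j ≤ p j := not_lt.1 (hi.notMem_of_lt hj)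
  (⟨(range (i + 1)).piecewise (q · - 1) (p <| · - 1),
      Antitone.piecewise_range (fun _ _ h => Nat.sub_le_sub_right (q.antitone h) 1)
        (p.antitone.comp_monotone fun _ _ h => Nat.sub_le_sub_right h 1) fun j hj => by
          have : p i < q i := hi.1; have := q.antitone (Nat.le_of_lt_succ hj); simp; omega,
      fun j hj => by simp [piecewise, p.eq_zero_of_le (j - 1) (by omega)]; omega⟩,
    ⟨(range i).piecewise (p · + 1) (q <| · + 1),
      Antitone.piecewise_range (p.antitone.add_const 1)
        (q.antitone.comp_monotone fun _ _ h => Nat.add_le_add_right h 1) fun j hj => by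
          have := hle j hj; have := q.antitone (show j ≤ i + 1 by omega); omega,
      fun j hj => by simp [piecewise, q.eq_zero_of_le (j + 1) (by omega)]; omega⟩)

def unswitchTails (α : BoundedPartition (b + 2)) (β : BoundedPartition b) (i : ℕ)
    (hi : IsLeast {j | β j ≤ α j + 1} i) : BoundedPartition (b + 1) × BoundedPartition (b + 1) :=
  have hlt (j : ℕ) (hj : j < i) : α j + 1 < β j := not_le.1 (hi.notMem_of_lt hj)
  have hib : i ≤ b := hi.2 (show β b ≤ α b + 1 by simp [β.eq_zero_of_le b le_rfl])
  (⟨(range i).piecewise (β · - 1) (α <| · + 1),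
      Antitone.piecewise_range (fun _ _ h => Nat.sub_le_sub_right (β.antitone h) 1)
        (α.antitone.comp_monotone fun _ _ h => Nat.add_le_add_right h 1) fun j hj => by
          have := hlt j hj; have := α.antitone (show j ≤ i + 1 by omega); omega,
      fun j hj => by simp [piecewise, α.eq_zero_of_le (j + 1) (by omega)]; omega⟩,
    ⟨(range (i + 1)).piecewise (α · + 1) (β <| · - 1),
      Antitone.piecewise_range (α.antitone.add_const 1)
        (β.antitone.comp_monotone fun _ _ h => Nat.sub_le_sub_right h 1) fun j hj => by
          have : β i ≤ α i + 1 := hi.1; have := α.antitone (Nat.le_of_lt_succ hj); simp; omega,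
      fun j hj => by simp [piecewise, β.eq_zero_of_le (j - 1) (by omega)]; omega⟩)

theorem isLeast_unswitchTails (α : BoundedPartition (b + 2)) (β : BoundedPartition b) (i : ℕ)
    (hi : IsLeast {j | β j ≤ α j + 1} i) :
    IsLeast {j | (unswitchTails α β i hi).1 j < (unswitchTails α β i hi).2 j} i := by
  refine ⟨?_, fun j hj => not_lt.1 fun hji => ?_⟩
  · have := α.antitone (Nat.le_add_right i 1)
    simp [unswitchTails, piecewise]
    omega
  · have hmin := hi.notMem_of_lt hji
    simp [unswitchTails, piecewise, hji, hji.le] at hj hmin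
    omega

theorem isLeast_switchTails (p q : BoundedPartition (b + 1)) (i : ℕ)
    (hi : IsLeast {j | p j < q j} i) :
    IsLeast {j | (switchTails p q i hi).2 j ≤ (switchTails p q i hi).1 j + 1} i := by
  refine ⟨?_, fun j hj => not_lt.1 fun hji => ?_⟩
  · have : p i < q i := hi.1
    have := q.antitone (Nat.le_add_right i 1)
    simp [switchTails, piecewise]
    omega
  · have hmin := hi.notMem_of_lt hji
    have : p i < q i := hi.1
    have := q.antitone hji.le
    simp [switchTails, piecewise, hji, hji.le] at hj hmin
    omega

theorem switchTails_unswitchTails (α : BoundedPartition (b + 2)) (β : BoundedPartition b) (i : ℕ)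
    (hi : IsLeast {j | β j ≤ α j + 1} i) (i' : ℕ)
    (hi' : IsLeast {j | (unswitchTails α β i hi).1 j < (unswitchTails α β i hi).2 j} i') :
    switchTails _ _ i' hi' = (α, β) := by
  obtain rfl := (isLeast_unswitchTails α β i hi).unique hi'
  ext j
  · by_cases hj : j ≤ i
    · simp [switchTails, unswitchTails, piecewise, hj]
    · simp [switchTails, unswitchTails, piecewise, hj, show ¬ j - 1 < i by omega,
        show j - 1 + 1 = j by omega]
  · by_cases hj : j < i
    · have := hi.notMem_of_lt hj
      simp [switchTails, unswitchTails, piecewise, hj] at this ⊢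
      omega
    · simp [switchTails, unswitchTails, piecewise, hj]

theorem unswitchTails_switchTails (p q : BoundedPartition (b + 1)) (i : ℕ)
    (hi : IsLeast {j | p j < q j} i) (i' : ℕ)
    (hi' : IsLeast {j | (switchTails p q i hi).2 j ≤ (switchTails p q i hi).1 j + 1} i') :
    unswitchTails _ _ i' hi' = (p, q) := by
  obtain rfl := (isLeast_switchTails p q i hi).unique hi'
  ext j
  · by_cases hj : j < i
    · simp [switchTails, unswitchTails, piecewise, hj]
    · simp [switchTails, unswitchTails, piecewise, hj]
  · by_cases hj : j ≤ i
    · have : p i < q i := hi.1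
      have := q.antitone hj
      simp [switchTails, unswitchTails, piecewise, hj]
      omega
    · simp [switchTails, unswitchTails, piecewise, hj, show ¬ j - 1 < i by omega,
        show j - 1 + 1 = j by omega]

theorem size_unswitchTails (α : BoundedPartition (b + 2)) (β : BoundedPartition b) (i : ℕ)
    (hi : IsLeast {j | β j ≤ α j + 1} i) :
    (unswitchTails α β i hi).1.size + (unswitchTails α β i hi).2.size = α.size + β.size + 1 := by
  have hib : i ≤ b := hi.2 (show β b ≤ α b + 1 by simp [β.eq_zero_of_le b le_rfl])
  have hβ : ∑ j ∈ range i, (β j - 1) + i = ∑ j ∈ range i, β j := by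
    have := sum_congr (s₁ := range i) rfl fun j hj => Nat.sub_add_cancel (m := 1) (n := β j) <| by
      have : α j + 1 < β j := not_le.1 (hi.notMem_of_lt (mem_range.1 hj))
      omega
    simpa [sum_add_distrib] using this
  have hα : ∑ j ∈ Ico i (b + 1), α (j + 1) = ∑ j ∈ Ico (i + 1) (b + 2), α j :=
    sum_Ico_add' _ _ _ _
  have hβ' : ∑ j ∈ Ico i b, β j = ∑ j ∈ Ico (i + 1) (b + 1), β (j - 1) := by
    simp [← sum_Ico_add' (fun j => β (j - 1)) i b 1]
  simp only [size, unswitchTails]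
  rw [sum_range_piecewise_range _ _ (by omega), sum_range_piecewise_range _ _ (by omega),
    ← sum_range_add_sum_Ico _ (by omega : i + 1 ≤ b + 2), ← sum_range_add_sum_Ico _ hib,
    sum_add_distrib, hα, ← hβ']
  simp
  omega

def tailSwitchEquiv (b : ℕ) :
    BoundedPartition (b + 2) × BoundedPartition b ≃
      {pq : BoundedPartition (b + 1) × BoundedPartition (b + 1) // ∃ j, pq.1 j < pq.2 j} where
  toFun y :=
    have hy : ∃ j, y.2 j ≤ y.1 j + 1 := ⟨b, by simp [y.2.eq_zero_of_le b le_rfl]⟩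
    ⟨unswitchTails y.1 y.2 _ (Nat.isLeast_find hy), _,
      (isLeast_unswitchTails y.1 y.2 _ (Nat.isLeast_find hy)).1⟩
  invFun x := switchTails x.1.1 x.1.2 _ (Nat.isLeast_find x.2)
  left_inv y := switchTails_unswitchTails _ _ _ (Nat.isLeast_find _) _ (Nat.isLeast_find _)
  right_inv x := Subtype.ext <|
    unswitchTails_switchTails _ _ _ (Nat.isLeast_find _) _ (Nat.isLeast_find _)

theorem size_tailSwitchEquiv (y : BoundedPartition (b + 2) × BoundedPartition b) :
    (tailSwitchEquiv b y).1.1.size + (tailSwitchEquiv b y).1.2.size = y.1.size + y.2.size + 1 :=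
  size_unswitchTails _ _ _ (Nat.isLeast_find _)

theorem weightGenFun_crossing (b : ℕ) :
    weightGenFun (fun pq : {pq : BoundedPartition (b + 1) × BoundedPartition (b + 1) //
        ∃ j, pq.1 j < pq.2 j} => pq.1.1.size + pq.1.2.size) =
      X * (weightGenFun (size : BoundedPartition (b + 2) → ℕ) *
        weightGenFun (size : BoundedPartition b → ℕ)) := by
  rw [weightGenFun_congr (tailSwitchEquiv b) size_tailSwitchEquiv,
    weightGenFun_add_const fun y : BoundedPartition (b + 2) × BoundedPartition b =>
      y.1.size + y.2.size,
    pow_one, weightGenFun_prod (finite_size_eq _) (finite_size_eq _)]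

theorem weightGenFun_nonCrossing_mul_prod (b : ℕ) :
    weightGenFun (fun pq : {pq : BoundedPartition (b + 1) × BoundedPartition (b + 1) //
        ¬ ∃ j, pq.1 j < pq.2 j} => pq.1.1.size + pq.1.2.size) *
      ((∏ j ∈ Icc 1 (b + 1), (1 - X ^ j)) * ∏ j ∈ Icc 1 (b + 2), (1 - X ^ j)) = 1 - X := by
  have hsplit := weightGenFun_eq_add_compl _
    (finite_fiber_prod (finite_size_eq (b + 1)) (finite_size_eq (b + 1)))
    (fun pq : BoundedPartition (b + 1) × BoundedPartition (b + 1) => ∃ j, pq.1 j < pq.2 j)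
  rw [weightGenFun_prod (finite_size_eq _) (finite_size_eq _), weightGenFun_crossing] at hsplit
  have h₀ := weightGenFun_size_mul_prod b
  have h₁ := weightGenFun_size_mul_prod (b + 1)
  have h₂ := weightGenFun_size_mul_prod (b + 2)
  rw [prod_Icc_succ_top (b := b + 1) (by omega)] at h₂ ⊢
  rw [prod_Icc_succ_top (b := b) (by omega)] at h₁ h₂ ⊢
  rw [eq_sub_of_add_eq' hsplit.symm]
  set D₁ := (∏ j ∈ Icc 1 b, (1 - X ^ j : ℚ⟦X⟧)) * (1 - X ^ (b + 1)) with hD₁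
  set P₀ := weightGenFun (size : BoundedPartition b → ℕ)
  set P₁ := weightGenFun (size : BoundedPartition (b + 1) → ℕ)
  set P₂ := weightGenFun (size : BoundedPartition (b + 2) → ℕ)
  calc (P₁ * P₁ - X * (P₂ * P₀)) * (D₁ * (D₁ * (1 - X ^ (b + 2))))
      = P₁ * D₁ * (P₁ * D₁) * (1 - X ^ (b + 2)) -
        X * (P₂ * (D₁ * (1 - X ^ (b + 2)))) * (P₀ * ∏ j ∈ Icc 1 b, (1 - X ^ j)) *
          (1 - X ^ (b + 1)) := by
        rw [hD₁]; ring
    _ = 1 - X := by rw [h₀, h₁, h₂]; ring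

abbrev TwoRowPlanePartition (a : ℕ) : Type :=
  {f : Fin 2 → Fin a → ℕ //
    (∀ i : Fin 2, ∀ j j' : Fin a, j ≤ j' → f i j' ≤ f i j) ∧ ∀ j : Fin a, f 1 j ≤ f 0 j}

def ofFin (f : Fin b → ℕ) (hf : Antitone f) : BoundedPartition b where
  toFun j := if h : j < b then f ⟨j, h⟩ else 0
  antitone i j hij := by
    by_cases hj : j < b
    · simpa [hj, hij.trans_lt hj] using hf (Fin.mk_le_mk.2 hij)
    · simp [hj]
  eq_zero_of_le j hj := by simp [not_lt.2 hj]

theorem size_ofFin (f : Fin b → ℕ) (hf : Antitone f) : (ofFin f hf).size = ∑ j, f j := by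
  simp [size, ofFin, sum_range]

def planePartitionEquiv (a : ℕ) :
    TwoRowPlanePartition a ≃
      {pq : BoundedPartition a × BoundedPartition a // ¬ ∃ j, pq.1 j < pq.2 j} where
  toFun f := ⟨(ofFin (f.1 0) (f.2.1 0), ofFin (f.1 1) (f.2.1 1)), by
    rintro ⟨j, hj⟩
    by_cases h : j < a
    · simp only [ofFin, dif_pos h] at hj
      exact (f.2.2 _).not_gt hj
    · simp [ofFin, h] at hj⟩
  invFun pq := ⟨![(pq.1.1 ·), (pq.1.2 ·)], Fin.forall_fin_two.2
    ⟨fun _ _ h => pq.1.1.antitone h, fun _ _ h => pq.1.2.antitone h⟩,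
    fun j => not_lt.1 fun h => pq.2 ⟨j, h⟩⟩
  left_inv f := by
    ext i j
    fin_cases i <;> simp [ofFin]
  right_inv pq := by
    ext j
    all_goals
      by_cases h : j < a
      · simp [ofFin, h]
      · simp [ofFin, h, pq.1.1.eq_zero_of_le j (not_lt.1 h),
          pq.1.2.eq_zero_of_le j (not_lt.1 h)]

theorem size_planePartitionEquiv (a : ℕ) (f : TwoRowPlanePartition a) :
    (planePartitionEquiv a f).1.1.size + (planePartitionEquiv a f).1.2.size =
      ∑ i, ∑ j, f.1 i j := by
  rw [Fin.sum_univ_two, ← size_ofFin _ (f.2.1 0), ← size_ofFin _ (f.2.1 1)]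
  rfl

theorem mk_planePartitionCount (a : ℕ) :
    PowerSeries.mk (fun k => (planePartitionCount a k : ℚ)) =
      weightGenFun (fun pq : {pq : BoundedPartition a × BoundedPartition a //
        ¬ ∃ j, pq.1 j < pq.2 j} => pq.1.1.size + pq.1.2.size) := by
  rw [weightGenFun_congr (planePartitionEquiv a) (size_planePartitionEquiv a)]
  ext k
  rw [coeff_mk, coeff_weightGenFun]
  exact_mod_cast Nat.card_congr <| (Equiv.subtypeEquivRight fun _ => and_assoc.symm).trans
    (Equiv.subtypeSubtypeEquivSubtypeInter _ _).symm

end BoundedPartition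

theorem planePartition_genFun (a : ℕ) (ha : 1 ≤ a) :
    (PowerSeries.mk fun k => (planePartitionCount a k : ℚ)) *
      ((1 - X) * (∏ j ∈ Finset.Icc 2 a, (1 - X ^ j) ^ 2) * (1 - X ^ (a + 1))) = 1 := by
  obtain ⟨b, rfl⟩ : ∃ b, a = b + 1 := ⟨a - 1, by omega⟩
  have hprod : ∏ j ∈ Icc 1 (b + 1), (1 - X ^ j : ℚ⟦X⟧) =
      (1 - X) * ∏ j ∈ Icc 2 (b + 1), (1 - X ^ j) := by
    rw [Icc_eq_cons_Ioc (by omega), prod_cons, ← Icc_add_one_left_eq_Ioc, pow_one]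
    rfl
  have hX : (1 - X : ℚ⟦X⟧) ≠ 0 := fun h => by simpa using congrArg constantCoeff h
  refine mul_left_cancel₀ hX ?_
  conv_rhs => rw [mul_one, ← BoundedPartition.weightGenFun_nonCrossing_mul_prod b,
    ← BoundedPartition.mk_planePartitionCount]
  rw [prod_Icc_succ_top (b := b + 1) (by omega), hprod, prod_pow]
  ring
end

section
/- For r = min(a,l) and s = max(a,l), the generating function for plane partitions fitting inside an l × a rectangle equals ∏_{j=r}^{s} (1/(1-x^j))^r · ∏_{i=1}^{r-1} (1/(1-x^i))^i · (1/(1-x^{s+i}))^{r-i}. -/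
/-!
The proof is a sequential form of the Hillman–Grassl correspondence. View a plane partition as a
function `f : ℕ → ℕ → ℕ` supported in the box. If `f ≠ 0`, its path starts at the last nonzero
entry of the first row; in each column it runs down through the entries equal to the one at which
it entered, then steps one column to the left, and it leaves the first column in some row `r`.
If it started in column `c`, it has `r + c + 1` cells, as many as the hook joining `(r, c)` to the
first row and column, and lowering every entry on it by one leaves a plane partition.

Rank the cell `(r, c)` as `c * l + (l - 1 - r)` and give `f` the rank of the cell of its path.
Removing the path does not raise the rank, and the path is recovered from what remains by a reverse
path started in row `r` of the first column, running up. So plane partitions of rank `t` correspond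
to plane partitions of weight lower by the hook length `h_t` and rank at most `t`: the generating
function `F_t` of plane partitions of rank below `t` satisfies `F_{t+1} * (1 - X ^ h_t) = F_t`.
From `F_0 = 1` this gives `F_{l a} * ∏ (1 - X ^ (i + j + 1)) = 1`, the product running over the
box, and counting how often each hook length occurs rewrites that product as the stated one.
-/

open PowerSeries

/-- Number of plane partitions of `k` fitting inside an `l × a` rectangle:
`l × a` arrays of nonnegative integers, weakly decreasing along rows and
columns, with total sum `k`. -/
noncomputable def rectPlanePartitionCount (l a k : ℕ) : ℕ :=
  Nat.card {f : Fin l → Fin a → ℕ //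
    (∀ i : Fin l, ∀ j j' : Fin a, j ≤ j' → f i j' ≤ f i j) ∧
    (∀ j : Fin a, ∀ i i' : Fin l, i ≤ i' → f i' j ≤ f i j) ∧
    ∑ i, ∑ j, f i j = k}

open Finset

namespace RectPlanePartition

variable {l a : ℕ} {f g : ℕ → ℕ → ℕ}

theorem lt_card_filter_range_iff {p : ℕ → Prop} [DecidablePred p] {n : ℕ}
    (hp : ∀ ⦃x y⦄, x ≤ y → p y → p x) (hn : ∀ x, p x → x < n) (x : ℕ) :
    x < #{y ∈ range n | p y} ↔ p x := by
  constructor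
  · intro hx
    by_contra hpx
    have hsub : {y ∈ range n | p y} ⊆ range x := fun y hy => by
      simp only [mem_filter, mem_range] at hy ⊢
      by_contra hxy
      exact hpx (hp (not_lt.1 hxy) hy.2)
    simpa using hx.trans_le (card_le_card hsub)
  · intro hpx
    have hsub : range (x + 1) ⊆ {y ∈ range n | p y} := fun y hy => by
      simp only [mem_filter, mem_range] at hy ⊢
      exact ⟨(Nat.lt_succ_iff.1 hy).trans_lt (hn x hpx), hp (Nat.lt_succ_iff.1 hy) hpx⟩
    simpa using card_le_card hsub

structure IsPlanePartition (l a : ℕ) (f : ℕ → ℕ → ℕ) : Prop where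
  row_succ_le : ∀ x y, f (x + 1) y ≤ f x y
  col_succ_le : ∀ x y, f x (y + 1) ≤ f x y
  eq_zero_of_le_row : ∀ x y, l ≤ x → f x y = 0
  eq_zero_of_le_col : ∀ x y, a ≤ y → f x y = 0

def weight (l a : ℕ) (f : ℕ → ℕ → ℕ) : ℕ := ∑ x ∈ range l, ∑ y ∈ range a, f x y

def colCount (l : ℕ) (f : ℕ → ℕ → ℕ) (y v : ℕ) : ℕ := #{x ∈ range l | v ≤ f x y}

/-- The last nonzero column of the first row (`0` when `f 0 0 = 0`). -/
def lastCol (a : ℕ) (f : ℕ → ℕ → ℕ) : ℕ := #{y ∈ range a | 0 < f 0 y} - 1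

namespace IsPlanePartition

theorem antitone_row (hf : IsPlanePartition l a f) (y : ℕ) : Antitone (f · y) :=
  antitone_nat_of_succ_le fun x => hf.row_succ_le x y

theorem antitone_col (hf : IsPlanePartition l a f) (x : ℕ) : Antitone (f x) :=
  antitone_nat_of_succ_le fun y => hf.col_succ_le x y

theorem eq_zero (hf : IsPlanePartition l a f) (h0 : f 0 0 = 0) (x y : ℕ) : f x y = 0 :=
  Nat.eq_zero_of_le_zero <| h0 ▸
    (hf.antitone_col x (Nat.zero_le y)).trans (hf.antitone_row 0 (Nat.zero_le x))

theorem lt_colCount_iff (hf : IsPlanePartition l a f) {v : ℕ} (hv : 0 < v) (x y : ℕ) :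
    x < colCount l f y v ↔ v ≤ f x y :=
  lt_card_filter_range_iff (fun _ _ hxx' h => h.trans (hf.antitone_row y hxx'))
    (fun x hx => by
      by_contra hl
      rw [hf.eq_zero_of_le_row x y (not_lt.1 hl)] at hx
      omega) x

theorem colCount_eq (hf : IsPlanePartition l a f) {v m y : ℕ} (hv : 0 < v)
    (hlt : ∀ x < m, v ≤ f x y) (hm : f m y < v) : colCount l f y v = m := by
  apply le_antisymm
  · by_contra hgt
    exact (hm.trans_le ((hf.lt_colCount_iff hv m y).1 (not_le.1 hgt))).false
  · cases m with
    | zero => exact Nat.zero_le _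
    | succ m => exact (hf.lt_colCount_iff hv m y).2 (hlt m (lt_add_one m))

theorem lt_card_row_iff (hf : IsPlanePartition l a f) (y : ℕ) :
    y < #{y ∈ range a | 0 < f 0 y} ↔ 0 < f 0 y :=
  lt_card_filter_range_iff (fun _ _ hyy' h => h.trans_le (hf.antitone_col 0 hyy'))
    (fun y hy => by
      by_contra ha
      rw [hf.eq_zero_of_le_col 0 y (not_lt.1 ha)] at hy
      omega) y

theorem eq_zero_of_lastCol_lt (hf : IsPlanePartition l a f) {y : ℕ} (hy : lastCol a f < y)
    (x : ℕ) : f x y = 0 := by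
  have h0y : f 0 y = 0 := by
    by_contra h
    have := (hf.lt_card_row_iff y).2 (by omega)
    unfold lastCol at hy
    omega
  exact Nat.eq_zero_of_le_zero (h0y ▸ hf.antitone_row y (Nat.zero_le x))

theorem lastCol_lt (hf : IsPlanePartition l a f) (h00 : 0 < f 0 0) : lastCol a f < a := by
  have h1 := (hf.lt_card_row_iff 0).2 h00
  have h2 := card_filter_le (range a) (fun y => 0 < f 0 y)
  rw [card_range] at h2
  unfold lastCol
  omega

theorem zero_lt_lastCol (hf : IsPlanePartition l a f) (h00 : 0 < f 0 0) :
    0 < f 0 (lastCol a f) := by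
  have := (hf.lt_card_row_iff 0).2 h00
  exact (hf.lt_card_row_iff _).1 (by unfold lastCol; omega)

theorem lastCol_le (hf : IsPlanePartition l a f) {c : ℕ} (hc : f 0 (c + 1) = 0) :
    lastCol a f ≤ c := by
  have := (hf.lt_card_row_iff (c + 1)).not.2 (by omega)
  unfold lastCol
  omega

theorem lastCol_eq (hf : IsPlanePartition l a f) {c : ℕ} (hc : 0 < f 0 c)
    (hc' : f 0 (c + 1) = 0) : lastCol a f = c := by
  have := (hf.lt_card_row_iff c).2 hc
  have := hf.lastCol_le hc'
  unfold lastCol at *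
  omega

theorem sub_indicator (hf : IsPlanePartition l a f) {S : ℕ → ℕ → Prop} [DecidableRel S]
    (hrow : ∀ x y, S x y → ¬ S (x + 1) y → f (x + 1) y < f x y)
    (hcol : ∀ x y, S x y → ¬ S x (y + 1) → f x (y + 1) < f x y) :
    IsPlanePartition l a (fun x y => f x y - if S x y then 1 else 0) where
  row_succ_le x y := by
    have := hf.row_succ_le x y
    by_cases h : S x y <;> by_cases h' : S (x + 1) y <;> simp only [h, h', ↓reduceIte] <;>
      first | omega | (have := hrow x y h h'; omega)
  col_succ_le x y := by
    have := hf.col_succ_le x y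
    by_cases h : S x y <;> by_cases h' : S x (y + 1) <;> simp only [h, h', ↓reduceIte] <;>
      first | omega | (have := hcol x y h h'; omega)
  eq_zero_of_le_row x y hx := by rw [hf.eq_zero_of_le_row x y hx, Nat.zero_sub]
  eq_zero_of_le_col x y hy := by rw [hf.eq_zero_of_le_col x y hy, Nat.zero_sub]

theorem add_indicator (hf : IsPlanePartition l a f) {S : ℕ → ℕ → Prop} [DecidableRel S]
    (hrow : ∀ x y, S (x + 1) y → ¬ S x y → f (x + 1) y < f x y)
    (hcol : ∀ x y, S x (y + 1) → ¬ S x y → f x (y + 1) < f x y)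
    (hbox : ∀ x y, S x y → x < l ∧ y < a) :
    IsPlanePartition l a (fun x y => f x y + if S x y then 1 else 0) where
  row_succ_le x y := by
    have := hf.row_succ_le x y
    by_cases h : S (x + 1) y <;> by_cases h' : S x y <;> simp only [h, h', ↓reduceIte] <;>
      first | omega | (have := hrow x y h h'; omega)
  col_succ_le x y := by
    have := hf.col_succ_le x y
    by_cases h : S x (y + 1) <;> by_cases h' : S x y <;> simp only [h, h', ↓reduceIte] <;>
      first | omega | (have := hcol x y h h'; omega)
  eq_zero_of_le_row x y hx := by
    rw [hf.eq_zero_of_le_row x y hx, if_neg fun h => (hbox x y h).1.not_ge hx]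
  eq_zero_of_le_col x y hy := by
    rw [hf.eq_zero_of_le_col x y hy, if_neg fun h => (hbox x y h).2.not_ge hy]

end IsPlanePartition

/-- The cells of a lattice path: column `y ≤ c` is occupied from row `b (y + 1)` to row `b y`. -/
def OnStaircase (c : ℕ) (b : ℕ → ℕ) (x y : ℕ) : Prop := y ≤ c ∧ b (y + 1) ≤ x ∧ x ≤ b y

instance (c : ℕ) (b : ℕ → ℕ) : DecidableRel (OnStaircase c b) := fun _ _ => by
  unfold OnStaircase; infer_instance

def staircase (c : ℕ) (b : ℕ → ℕ) : ℕ → ℕ → ℕ := fun x y => if OnStaircase c b x y then 1 else 0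

namespace OnStaircase

variable {c : ℕ} {b : ℕ → ℕ} {x y : ℕ}

theorem eq_of_not_succ_row (h : OnStaircase c b x y) (h' : ¬ OnStaircase c b (x + 1) y) :
    x = b y := by
  obtain ⟨hy, h1, h2⟩ := h
  by_contra hne
  exact h' ⟨hy, by omega, by omega⟩

theorem succ_row_eq_of_not (h : OnStaircase c b (x + 1) y) (h' : ¬ OnStaircase c b x y) :
    x + 1 = b (y + 1) := by
  obtain ⟨hy, h1, h2⟩ := h
  by_contra hne
  exact h' ⟨hy, by omega, by omega⟩

theorem lt_of_not_succ_col (hb : Antitone b) (h : OnStaircase c b x y)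
    (h' : ¬ OnStaircase c b x (y + 1)) (hy : y < c) : b (y + 1) < x := by
  obtain ⟨-, h1, -⟩ := h
  have := hb (Nat.le_add_right (y + 1) 1)
  by_contra hle
  exact h' ⟨hy, by omega, by omega⟩

theorem lt_of_succ_col (hb : Antitone b) (h : OnStaircase c b x (y + 1))
    (h' : ¬ OnStaircase c b x y) : x < b (y + 1) := by
  obtain ⟨hy, -, h2⟩ := h
  have := hb (Nat.le_add_right y 1)
  by_contra hle
  exact h' ⟨by omega, by omega, by omega⟩

end OnStaircase

section Staircase

variable {c : ℕ} {b : ℕ → ℕ}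

theorem staircase_eq_one {x y : ℕ} (h : OnStaircase c b x y) : staircase c b x y = 1 := if_pos h

theorem staircase_eq_zero {x y : ℕ} (h : ¬ OnStaircase c b x y) : staircase c b x y = 0 :=
  if_neg h

theorem staircase_congr {b' : ℕ → ℕ} (h : ∀ y ≤ c + 1, b y = b' y) :
    staircase c b = staircase c b' := by
  funext x y
  have hiff : OnStaircase c b x y ↔ OnStaircase c b' x y := by
    by_cases hy : y ≤ c
    · rw [OnStaircase, OnStaircase, h y (by omega), h (y + 1) (by omega)]
    · simp [OnStaircase, hy]
  simp only [staircase, hiff]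

theorem sum_range_sub_antitone (hb : Antitone b) (n : ℕ) :
    ∑ y ∈ range n, (b y + 1 - b (y + 1)) = n + b 0 - b n := by
  induction n with
  | zero => simp
  | succ n ih =>
    have h1 := hb (Nat.le_add_right n 1)
    have h2 := hb (Nat.zero_le n)
    rw [sum_range_succ, ih]
    omega

theorem sum_staircase (hb : Antitone b) (hbl : b 0 < l) (hc : c < a) (hbc : b (c + 1) = 0) :
    ∑ x ∈ range l, ∑ y ∈ range a, staircase c b x y = b 0 + c + 1 := by
  have hcol : ∀ y, ∑ x ∈ range l, staircase c b x y =
      if y ≤ c then b y + 1 - b (y + 1) else 0 := fun y => by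
    simp only [staircase]
    rw [← sum_filter, sum_const, smul_eq_mul, mul_one]
    split_ifs with hy
    · have hfilter : {x ∈ range l | OnStaircase c b x y} = Icc (b (y + 1)) (b y) := by
        ext x
        have := hb (Nat.zero_le y)
        rw [mem_filter, mem_range, mem_Icc, OnStaircase]
        omega
      rw [hfilter, Nat.card_Icc]
    · exact card_eq_zero.2 (filter_eq_empty_iff.2 fun _ _ h => hy h.1)
  have hrange : {y ∈ range a | y ≤ c} = range (c + 1) := by
    ext y
    simp only [mem_filter, mem_range]
    omega
  rw [sum_comm, sum_congr rfl fun y _ => hcol y, ← sum_filter, hrange,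
    sum_range_sub_antitone hb, hbc]
  omega

theorem weight_add_staircase (hb : Antitone b) (hbl : b 0 < l) (hc : c < a)
    (hbc : b (c + 1) = 0) : weight l a (g + staircase c b) = weight l a g + (b 0 + c + 1) := by
  simp only [weight, Pi.add_apply, sum_add_distrib]
  rw [sum_staircase hb hbl hc hbc]

theorem sub_staircase_add (hpos : ∀ x y, OnStaircase c b x y → 0 < f x y) :
    f - staircase c b + staircase c b = f := by
  funext x y
  by_cases h : OnStaircase c b x y
  · have := hpos x y h
    simp only [Pi.add_apply, Pi.sub_apply, staircase_eq_one h]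
    omega
  · simp only [Pi.add_apply, Pi.sub_apply, staircase_eq_zero h, Nat.sub_zero, Nat.add_zero]

theorem add_staircase_sub : f + staircase c b - staircase c b = f := by
  funext x y
  simp

end Staircase

/-- The path of `f` starts at the last nonzero cell of the first row and moves through the columns
`lastCol a f, …, 0`: it enters column `y` in row `pathBound l a f (y + 1)`, runs down through the
entries equal to that one, and leaves in row `pathBound l a f y`. -/
def pathBound (l a : ℕ) (f : ℕ → ℕ → ℕ) (y : ℕ) : ℕ :=
  if lastCol a f < y then 0 else colCount l f y (f (pathBound l a f (y + 1)) y) - 1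
termination_by lastCol a f + 1 - y

def removePath (l a : ℕ) (f : ℕ → ℕ → ℕ) : ℕ → ℕ → ℕ :=
  f - staircase (lastCol a f) (pathBound l a f)

/-- The reverse path of `g` starts in row `r` of the first column: it enters column `y` in row
`revPathBound l g r y`, runs up through the entries equal to that one, and leaves towards column
`y + 1` in row `revPathBound l g r (y + 1)`. -/
def revPathBound (l : ℕ) (g : ℕ → ℕ → ℕ) (r : ℕ) : ℕ → ℕ
  | 0 => r
  | y + 1 => colCount l g y (g (revPathBound l g r y) y + 1)

def addPath (l : ℕ) (g : ℕ → ℕ → ℕ) (r c : ℕ) : ℕ → ℕ → ℕ :=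
  g + staircase c (revPathBound l g r)

theorem pathBound_of_lt {y : ℕ} (hy : lastCol a f < y) : pathBound l a f y = 0 := by
  rw [pathBound, if_pos hy]

theorem pathBound_of_le {y : ℕ} (hy : y ≤ lastCol a f) :
    pathBound l a f y = colCount l f y (f (pathBound l a f (y + 1)) y) - 1 := by
  rw [pathBound, if_neg (not_lt.2 hy)]

theorem removePath_apply_of_not_onStaircase {x y : ℕ}
    (h : ¬ OnStaircase (lastCol a f) (pathBound l a f) x y) : removePath l a f x y = f x y := by
  simp only [removePath, Pi.sub_apply, staircase_eq_zero h, Nat.sub_zero]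

theorem addPath_apply_of_not_onStaircase {r c x y : ℕ}
    (h : ¬ OnStaircase c (revPathBound l g r) x y) : addPath l g r c x y = g x y := by
  simp only [addPath, Pi.add_apply, staircase_eq_zero h, Nat.add_zero]

namespace IsPlanePartition

section RemovePath

variable (hf : IsPlanePartition l a f)
include hf

theorem le_pathBound_iff {y : ℕ} (hy : y ≤ lastCol a f)
    (hpos : 0 < f (pathBound l a f (y + 1)) y) (x : ℕ) :
    x ≤ pathBound l a f y ↔ f (pathBound l a f (y + 1)) y ≤ f x y := by
  have hentry := (hf.lt_colCount_iff hpos _ y).2 le_rfl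
  rw [← hf.lt_colCount_iff hpos, pathBound_of_le hy]
  omega

theorem pathBound_entry_pos (h00 : 0 < f 0 0) {y : ℕ} (hy : y ≤ lastCol a f) :
    0 < f (pathBound l a f (y + 1)) y := by
  induction hy using Nat.decreasingInduction with
  | self =>
    rw [pathBound_of_lt (Nat.lt_succ_self _)]
    exact hf.zero_lt_lastCol h00
  | of_succ y hy ih =>
    calc 0 < f (pathBound l a f (y + 1 + 1)) (y + 1) := ih
      _ ≤ f (pathBound l a f (y + 1)) (y + 1) := (hf.le_pathBound_iff hy ih _).1 le_rfl
      _ ≤ f (pathBound l a f (y + 1)) y := hf.col_succ_le _ _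

variable (h00 : 0 < f 0 0)
include h00

theorem antitone_pathBound : Antitone (pathBound l a f) := by
  refine antitone_nat_of_succ_le fun y => ?_
  rcases Nat.lt_or_ge (lastCol a f) y with hy | hy
  · rw [pathBound_of_lt hy, pathBound_of_lt (by omega)]
  · exact (hf.le_pathBound_iff hy (hf.pathBound_entry_pos h00 hy) _).2 le_rfl

theorem eq_of_onStaircase_pathBound {x y : ℕ}
    (h : OnStaircase (lastCol a f) (pathBound l a f) x y) :
    f x y = f (pathBound l a f (y + 1)) y :=
  le_antisymm (hf.antitone_row y h.2.1)
    ((hf.le_pathBound_iff h.1 (hf.pathBound_entry_pos h00 h.1) x).1 h.2.2)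

theorem pos_of_onStaircase_pathBound {x y : ℕ}
    (h : OnStaircase (lastCol a f) (pathBound l a f) x y) : 0 < f x y :=
  hf.eq_of_onStaircase_pathBound h00 h ▸ hf.pathBound_entry_pos h00 h.1

theorem apply_pathBound_succ_lt {y : ℕ} (hy : y ≤ lastCol a f) :
    f (pathBound l a f y + 1) y < f (pathBound l a f (y + 1)) y :=
  not_le.1 fun h => by
    have := (hf.le_pathBound_iff hy (hf.pathBound_entry_pos h00 hy) _).2 h
    omega

theorem pathBound_lt (y : ℕ) : pathBound l a f y < l := by
  by_contra hl
  rcases Nat.lt_or_ge (lastCol a f) y with hy | hy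
  · rw [pathBound_of_lt hy] at hl
    exact (hf.eq_zero_of_le_row 0 0 (by omega) ▸ h00).false
  · have := hf.pos_of_onStaircase_pathBound h00
      ⟨hy, hf.antitone_pathBound h00 (Nat.le_add_right y 1), le_rfl⟩
    rw [hf.eq_zero_of_le_row _ y (not_lt.1 hl)] at this
    exact this.false

theorem removePath_apply_of_onStaircase {x y : ℕ}
    (h : OnStaircase (lastCol a f) (pathBound l a f) x y) :
    removePath l a f x y = f (pathBound l a f (y + 1)) y - 1 := by
  simp only [removePath, Pi.sub_apply, staircase_eq_one h, hf.eq_of_onStaircase_pathBound h00 h]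

theorem isPlanePartition_removePath : IsPlanePartition l a (removePath l a f) := by
  have hb := hf.antitone_pathBound h00
  refine hf.sub_indicator (fun x y h h' => ?_) (fun x y h h' => ?_)
  · obtain rfl := h.eq_of_not_succ_row h'
    rw [hf.eq_of_onStaircase_pathBound h00 h]
    exact hf.apply_pathBound_succ_lt h00 h.1
  · rcases Nat.lt_or_ge y (lastCol a f) with hy | hy
    · calc f x (y + 1) ≤ f (pathBound l a f (y + 1) + 1) (y + 1) :=
            hf.antitone_row _ (h.lt_of_not_succ_col hb h' hy)
        _ < f (pathBound l a f (y + 1 + 1)) (y + 1) := hf.apply_pathBound_succ_lt h00 hy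
        _ ≤ f (pathBound l a f (y + 1)) y := by
          rw [← hf.eq_of_onStaircase_pathBound h00 ⟨hy, hb (Nat.le_add_right _ 1), le_rfl⟩]
          exact hf.col_succ_le _ _
        _ = f x y := (hf.eq_of_onStaircase_pathBound h00 h).symm
    · rw [hf.eq_zero_of_lastCol_lt (by omega) x]
      exact hf.pos_of_onStaircase_pathBound h00 h

theorem weight_removePath :
    weight l a f = weight l a (removePath l a f) + (pathBound l a f 0 + lastCol a f + 1) := by
  calc weight l a f
      = weight l a (removePath l a f + staircase (lastCol a f) (pathBound l a f)) := by
        rw [removePath, sub_staircase_add fun _ _ h => hf.pos_of_onStaircase_pathBound h00 h]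
    _ = _ := weight_add_staircase (hf.antitone_pathBound h00) (hf.pathBound_lt h00 0)
        (hf.lastCol_lt h00) (pathBound_of_lt (Nat.lt_succ_self _))

theorem lastCol_removePath_le : lastCol a (removePath l a f) ≤ lastCol a f :=
  (hf.isPlanePartition_removePath h00).lastCol_le <| Nat.eq_zero_of_le_zero <|
    (Nat.sub_le _ _).trans (hf.eq_zero_of_lastCol_lt (Nat.lt_succ_self _) 0).le

end RemovePath

section AddPath

variable (hg : IsPlanePartition l a g) {r : ℕ}
include hg

theorem lt_revPathBound_iff (x y : ℕ) :
    x < revPathBound l g r (y + 1) ↔ g (revPathBound l g r y) y < g x y :=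
  hg.lt_colCount_iff (Nat.succ_pos _) x y

theorem antitone_revPathBound : Antitone (revPathBound l g r) :=
  antitone_nat_of_succ_le fun y =>
    not_lt.1 fun h => lt_irrefl _ ((hg.lt_revPathBound_iff _ y).1 h)

theorem revPathBound_le (y : ℕ) : revPathBound l g r y ≤ r :=
  hg.antitone_revPathBound (Nat.zero_le y)

theorem eq_of_onStaircase_revPathBound {c x y : ℕ}
    (h : OnStaircase c (revPathBound l g r) x y) : g x y = g (revPathBound l g r y) y :=
  le_antisymm (not_lt.1 fun hlt => (not_lt.2 h.2.1) ((hg.lt_revPathBound_iff x y).2 hlt))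
    (hg.antitone_row y h.2.2)

theorem addPath_apply_of_onStaircase {c x y : ℕ} (h : OnStaircase c (revPathBound l g r) x y) :
    addPath l g r c x y = g (revPathBound l g r y) y + 1 := by
  simp only [addPath, Pi.add_apply, staircase_eq_one h, hg.eq_of_onStaircase_revPathBound h]

theorem isPlanePartition_addPath {c : ℕ} (hr : r < l) (hc : c < a) :
    IsPlanePartition l a (addPath l g r c) := by
  have hb := hg.antitone_revPathBound (r := r)
  refine hg.add_indicator (fun x y h h' => ?_) (fun x y h h' => ?_) (fun x y h => ?_)
  · rw [hg.eq_of_onStaircase_revPathBound h]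
    exact (hg.lt_revPathBound_iff x y).1 (by have := h.succ_row_eq_of_not h'; omega)
  · have hy : OnStaircase c (revPathBound l g r) (revPathBound l g r (y + 1)) y :=
      ⟨by have := h.1; omega, le_rfl, hb (Nat.le_add_right y 1)⟩
    calc g x (y + 1) = g (revPathBound l g r (y + 1)) (y + 1) :=
          hg.eq_of_onStaircase_revPathBound h
      _ ≤ g (revPathBound l g r (y + 1)) y := hg.col_succ_le _ _
      _ = g (revPathBound l g r y) y := hg.eq_of_onStaircase_revPathBound hy
      _ < g x y := (hg.lt_revPathBound_iff x y).1 (h.lt_of_succ_col hb h')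
  · exact ⟨h.2.2.trans_lt ((hg.revPathBound_le y).trans_lt hr), h.1.trans_lt hc⟩

theorem weight_addPath {c : ℕ} (hr : r < l) (hc : c < a)
    (hq : revPathBound l g r (c + 1) = 0) :
    weight l a (addPath l g r c) = weight l a g + (r + c + 1) :=
  weight_add_staircase hg.antitone_revPathBound hr hc hq

theorem revPathBound_le_pathBound (h00 : 0 < g 0 0) (hr : r ≤ pathBound l a g 0) {y : ℕ}
    (hy : y ≤ lastCol a g + 1) : revPathBound l g r y ≤ pathBound l a g y := by
  induction y with
  | zero => exact hr
  | succ y ih =>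
    have ih := ih (by omega)
    have hrun : OnStaircase (lastCol a g) (pathBound l a g) (pathBound l a g y) y :=
      ⟨by omega, hg.antitone_pathBound h00 (Nat.le_add_right y 1), le_rfl⟩
    refine not_lt.1 fun hlt => ?_
    have := (hg.lt_revPathBound_iff _ y).1 hlt
    rw [← hg.eq_of_onStaircase_pathBound h00 hrun] at this
    exact (hg.antitone_row y ih).not_gt this

theorem revPathBound_succ_eq_zero_of_col {c : ℕ} (hcol : ∀ x, g x c = 0) :
    revPathBound l g r (c + 1) = 0 :=
  hg.colCount_eq (Nat.succ_pos _) (fun x hx => absurd hx (Nat.not_lt_zero x))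
    (by rw [hcol]; omega)

end AddPath

section RemoveThenAdd

variable (hf : IsPlanePartition l a f) (h00 : 0 < f 0 0)
include hf h00

theorem revPathBound_removePath {y : ℕ} (hy : y ≤ lastCol a f + 1) :
    revPathBound l (removePath l a f) (pathBound l a f 0) y = pathBound l a f y := by
  induction y with
  | zero => rfl
  | succ y ih =>
    have hy : y ≤ lastCol a f := by omega
    have hb := hf.antitone_pathBound h00
    have hpos := hf.pathBound_entry_pos h00 hy
    rw [revPathBound, ih (by omega),
      hf.removePath_apply_of_onStaircase h00 ⟨hy, hb (Nat.le_add_right y 1), le_rfl⟩,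
      Nat.sub_add_cancel hpos]
    refine (hf.isPlanePartition_removePath h00).colCount_eq hpos (fun x hx => ?_) ?_
    · rw [removePath_apply_of_not_onStaircase fun h => by have := h.2.1; omega]
      exact hf.antitone_row y hx.le
    · rw [hf.removePath_apply_of_onStaircase h00 ⟨hy, le_rfl, hb (Nat.le_add_right y 1)⟩]
      omega

theorem addPath_removePath :
    addPath l (removePath l a f) (pathBound l a f 0) (lastCol a f) = f := by
  rw [addPath, staircase_congr fun y hy => hf.revPathBound_removePath h00 hy, removePath]
  exact sub_staircase_add fun _ _ h => hf.pos_of_onStaircase_pathBound h00 h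

theorem pathBound_le_pathBound_removePath (h00' : 0 < removePath l a f 0 0)
    (hc : lastCol a (removePath l a f) = lastCol a f) {y : ℕ} (hy : y ≤ lastCol a f + 1) :
    pathBound l a f y ≤ pathBound l a (removePath l a f) y := by
  have hF := hf.isPlanePartition_removePath h00
  induction hy using Nat.decreasingInduction with
  | self => rw [pathBound_of_lt (Nat.lt_succ_self _)]; exact Nat.zero_le _
  | of_succ y hy ih =>
    set u := pathBound l a (removePath l a f) (y + 1)
    rcases Nat.lt_or_ge (pathBound l a f y) u with hlt | hle
    · exact hlt.le.trans (hF.antitone_pathBound h00' (Nat.le_add_right y 1))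
    · refine (hF.le_pathBound_iff (by omega) (hF.pathBound_entry_pos h00' (by omega)) _).2 ?_
      rw [hf.removePath_apply_of_onStaircase h00 ⟨by omega, ih, hle⟩,
        hf.removePath_apply_of_onStaircase h00
          ⟨by omega, hf.antitone_pathBound h00 (Nat.le_add_right y 1), le_rfl⟩]

end RemoveThenAdd

section AddThenRemove

variable (hg : IsPlanePartition l a g) {r c : ℕ} (hr : r < l) (hc : c < a)
  (hq : revPathBound l g r (c + 1) = 0) (hz : g 0 (c + 1) = 0)
include hg hr hc hq hz

theorem lastCol_addPath : lastCol a (addPath l g r c) = c := by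
  refine (hg.isPlanePartition_addPath hr hc).lastCol_eq ?_ ?_
  · rw [hg.addPath_apply_of_onStaircase ⟨le_rfl, hq.le, Nat.zero_le _⟩]
    exact Nat.succ_pos _
  · rw [addPath_apply_of_not_onStaircase fun h => by have := h.1; omega, hz]

theorem pathBound_addPath {y : ℕ} (hy : y ≤ c + 1) :
    pathBound l a (addPath l g r c) y = revPathBound l g r y := by
  have hb := hg.antitone_revPathBound (r := r)
  induction hy using Nat.decreasingInduction with
  | self => rw [pathBound_of_lt (by rw [hg.lastCol_addPath hr hc hq hz]; omega), hq]
  | of_succ y hy ih =>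
    have hcount : colCount l (addPath l g r c) y (g (revPathBound l g r y) y + 1) =
        revPathBound l g r y + 1 := by
      refine (hg.isPlanePartition_addPath hr hc).colCount_eq (Nat.succ_pos _)
        (fun x hx => ?_) ?_
      · by_cases hxS : OnStaircase c (revPathBound l g r) x y
        · exact (hg.addPath_apply_of_onStaircase hxS).ge
        · have hlt : x < revPathBound l g r (y + 1) := by
            by_contra h
            exact hxS ⟨by omega, not_lt.1 h, by omega⟩
          exact ((hg.lt_revPathBound_iff x y).1 hlt).trans_le (Nat.le_add_right _ _)
      · rw [addPath_apply_of_not_onStaircase fun h => by have := h.2.2; omega]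
        exact Nat.lt_succ_of_le (hg.row_succ_le _ _)
    rw [pathBound_of_le (by rw [hg.lastCol_addPath hr hc hq hz]; omega), ih,
      hg.addPath_apply_of_onStaircase ⟨by omega, le_rfl, hb (Nat.le_add_right y 1)⟩,
      hcount, Nat.add_sub_cancel]

theorem removePath_addPath : removePath l a (addPath l g r c) = g := by
  rw [removePath, hg.lastCol_addPath hr hc hq hz,
    staircase_congr fun y hy => hg.pathBound_addPath hr hc hq hz hy, addPath]
  exact add_staircase_sub

end AddThenRemove

end IsPlanePartition

def encodeRank (l c r : ℕ) : ℕ := c * l + (l - 1 - r)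

/-- `r + c + 1` for the cell `(r, c)` of rank `t`. -/
def rankHook (l t : ℕ) : ℕ := (l - 1 - t % l) + t / l + 1

def pathRank (l a : ℕ) (f : ℕ → ℕ → ℕ) : ℕ := encodeRank l (lastCol a f) (pathBound l a f 0)

def addPathAt (l : ℕ) (g : ℕ → ℕ → ℕ) (t : ℕ) : ℕ → ℕ → ℕ := addPath l g (l - 1 - t % l) (t / l)

section Rank

variable {c r : ℕ}

theorem encodeRank_div (hr : r < l) : encodeRank l c r / l = c := by
  rw [encodeRank, Nat.add_comm, Nat.add_mul_div_right _ _ (by omega),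
    Nat.div_eq_of_lt (by omega), Nat.zero_add]

theorem encodeRank_mod (hr : r < l) : l - 1 - encodeRank l c r % l = r := by
  rw [encodeRank, Nat.mul_comm, Nat.mul_add_mod, Nat.mod_eq_of_lt (by omega)]
  omega

theorem encodeRank_div_mod (hl : 0 < l) (t : ℕ) : encodeRank l (t / l) (l - 1 - t % l) = t := by
  have := Nat.div_add_mod t l
  have := Nat.mod_lt t hl
  rw [encodeRank, Nat.mul_comm]
  omega

theorem rankHook_encodeRank (hr : r < l) : rankHook l (encodeRank l c r) = r + c + 1 := by
  rw [rankHook, encodeRank_div hr, encodeRank_mod hr]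

theorem encodeRank_lt_mul (hr : r < l) (hc : c < a) : encodeRank l c r < l * a := by
  have := Nat.mul_le_mul_right l hc
  rw [Nat.succ_mul, Nat.mul_comm a] at this
  unfold encodeRank
  omega

theorem encodeRank_le_encodeRank_iff {c' r' : ℕ} (hr : r < l) (hr' : r' < l) :
    encodeRank l c r ≤ encodeRank l c' r' ↔ c < c' ∨ (c = c' ∧ r' ≤ r) := by
  have key : ∀ {c c' r r' : ℕ}, r < l → c < c' → encodeRank l c r < encodeRank l c' r' :=
    fun hr h => by
      have := encodeRank_lt_mul hr h
      unfold encodeRank at this ⊢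
      rw [Nat.mul_comm l] at this
      omega
  constructor
  · intro h
    rcases lt_trichotomy c c' with hlt | rfl | hgt
    · exact Or.inl hlt
    · exact Or.inr ⟨rfl, by unfold encodeRank at h; omega⟩
    · exact absurd h (not_le.2 (key hr' hgt))
  · rintro (hlt | ⟨rfl, hle⟩)
    · exact (key hr hlt).le
    · unfold encodeRank; omega

end Rank

namespace IsPlanePartition

section RemovePathRank

variable (hf : IsPlanePartition l a f) (h00 : 0 < f 0 0)
include hf h00

theorem pathRank_lt : pathRank l a f < l * a :=
  encodeRank_lt_mul (hf.pathBound_lt h00 0) (hf.lastCol_lt h00)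

theorem weight_eq_add_rankHook :
    weight l a f = weight l a (removePath l a f) + rankHook l (pathRank l a f) := by
  rw [pathRank, rankHook_encodeRank (hf.pathBound_lt h00 0), hf.weight_removePath h00]

theorem pathRank_removePath_le (h00' : 0 < removePath l a f 0 0) :
    pathRank l a (removePath l a f) ≤ pathRank l a f := by
  refine (encodeRank_le_encodeRank_iff
    ((hf.isPlanePartition_removePath h00).pathBound_lt h00' 0) (hf.pathBound_lt h00 0)).2 ?_
  rcases (hf.lastCol_removePath_le h00).lt_or_eq with hlt | heq
  · exact Or.inl hlt
  · exact Or.inr ⟨heq, hf.pathBound_le_pathBound_removePath h00 h00' heq (Nat.zero_le _)⟩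

theorem addPathAt_removePath : addPathAt l (removePath l a f) (pathRank l a f) = f := by
  have hr := hf.pathBound_lt h00 0
  rw [addPathAt, pathRank, encodeRank_div hr, encodeRank_mod hr, hf.addPath_removePath h00]

end RemovePathRank

theorem eq_zero_of_weight_eq_zero (hf : IsPlanePartition l a f) (hw : weight l a f = 0) :
    f = 0 := by
  funext x y
  by_cases hx : x < l
  · by_cases hy : y < a
    · simp only [weight, sum_eq_zero_iff, mem_range] at hw
      exact hw x hx y hy
    · exact hf.eq_zero_of_le_col x y (not_lt.1 hy)
  · exact hf.eq_zero_of_le_row x y (not_lt.1 hx)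

theorem zero_zero_pos_of_weight_pos (hf : IsPlanePartition l a f) (hw : 0 < weight l a f) :
    0 < f 0 0 := by
  by_contra h0
  have hz : f = 0 := funext fun x => funext fun y => hf.eq_zero (by omega) x y
  simp [hz, weight] at hw

section AddPathRank

variable (hg : IsPlanePartition l a g) {r c : ℕ} (hr : r < l)
  (hrank : g 0 0 = 0 ∨ pathRank l a g ≤ encodeRank l c r)
include hg hr hrank

theorem lastCol_cases_of_pathRank_le (h00 : 0 < g 0 0) :
    lastCol a g < c ∨ (lastCol a g = c ∧ r ≤ pathBound l a g 0) :=
  (encodeRank_le_encodeRank_iff (hg.pathBound_lt h00 0) hr).1 (hrank.resolve_left (by omega))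

theorem zero_succ_eq_zero_of_pathRank_le : g 0 (c + 1) = 0 := by
  rcases Nat.eq_zero_or_pos (g 0 0) with h0 | h00
  · exact hg.eq_zero h0 _ _
  · refine hg.eq_zero_of_lastCol_lt ?_ 0
    rcases hg.lastCol_cases_of_pathRank_le hr hrank h00 with h | h <;> omega

theorem revPathBound_succ_eq_zero_of_pathRank_le : revPathBound l g r (c + 1) = 0 := by
  rcases Nat.eq_zero_or_pos (g 0 0) with h0 | h00
  · exact hg.revPathBound_succ_eq_zero_of_col fun x => hg.eq_zero h0 x c
  rcases hg.lastCol_cases_of_pathRank_le hr hrank h00 with hlt | ⟨rfl, hle⟩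
  · exact hg.revPathBound_succ_eq_zero_of_col (hg.eq_zero_of_lastCol_lt hlt)
  · exact Nat.eq_zero_of_le_zero ((hg.revPathBound_le_pathBound h00 hle le_rfl).trans
      (pathBound_of_lt (Nat.lt_succ_self _)).le)

end AddPathRank

theorem addPathAt_spec (hg : IsPlanePartition l a g) {t : ℕ} (ht : t < l * a)
    (hrank : weight l a g = 0 ∨ pathRank l a g ≤ t) :
    IsPlanePartition l a (addPathAt l g t) ∧
      weight l a (addPathAt l g t) = weight l a g + rankHook l t ∧
      pathRank l a (addPathAt l g t) = t ∧ removePath l a (addPathAt l g t) = g := by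
  have hl : 0 < l := Nat.pos_of_ne_zero fun h => by simp [h] at ht
  have hr : l - 1 - t % l < l := by omega
  have hc : t / l < a := Nat.div_lt_of_lt_mul ht
  have hrank' : g 0 0 = 0 ∨ pathRank l a g ≤ encodeRank l (t / l) (l - 1 - t % l) := by
    rw [encodeRank_div_mod hl]
    exact hrank.imp_left fun hw => congrFun (congrFun (hg.eq_zero_of_weight_eq_zero hw) 0) 0
  have hq := hg.revPathBound_succ_eq_zero_of_pathRank_le hr hrank'
  have hz := hg.zero_succ_eq_zero_of_pathRank_le hr hrank'
  refine ⟨hg.isPlanePartition_addPath hr hc, ?_, ?_, hg.removePath_addPath hr hc hq hz⟩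
  · rw [addPathAt, hg.weight_addPath hr hc hq, rankHook]
  · rw [addPathAt, pathRank, hg.lastCol_addPath hr hc hq hz,
      hg.pathBound_addPath hr hc hq hz (Nat.zero_le _), revPathBound, encodeRank_div_mod hl]

end IsPlanePartition

/-- Plane partitions of `k` in the box whose path has rank below `t`; the empty plane partition
(`k = 0`) is counted for every `t`. -/
noncomputable def countBelowRank (l a k t : ℕ) : ℕ :=
  Nat.card {f : ℕ → ℕ → ℕ // IsPlanePartition l a f ∧ weight l a f = k ∧
    (k = 0 ∨ pathRank l a f < t)}

def removePathEquiv {k t : ℕ} (hk : 0 < k) (ht : t < l * a) (hh : rankHook l t ≤ k) :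
    {f : ℕ → ℕ → ℕ // IsPlanePartition l a f ∧ weight l a f = k ∧ pathRank l a f = t} ≃
      {g : ℕ → ℕ → ℕ // IsPlanePartition l a g ∧ weight l a g = k - rankHook l t ∧
        (k - rankHook l t = 0 ∨ pathRank l a g < t + 1)} where
  toFun f := ⟨removePath l a f.1, by
    obtain ⟨f, hf, rfl, rfl⟩ := f
    dsimp only
    have h00 := hf.zero_zero_pos_of_weight_pos hk
    have hweight := hf.weight_eq_add_rankHook h00
    refine ⟨hf.isPlanePartition_removePath h00, by omega, ?_⟩
    rcases Nat.eq_zero_or_pos (weight l a (removePath l a f)) with h0 | hpos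
    · exact Or.inl (by omega)
    · exact Or.inr (Nat.lt_succ_of_le (hf.pathRank_removePath_le h00
        ((hf.isPlanePartition_removePath h00).zero_zero_pos_of_weight_pos hpos)))⟩
  invFun g := ⟨addPathAt l g.1 t, by
    obtain ⟨g, hg, hw, hrank⟩ := g
    dsimp only
    obtain ⟨hG, hwG, hrkG, -⟩ := hg.addPathAt_spec ht (hrank.imp hw.trans Nat.lt_succ_iff.1)
    exact ⟨hG, by omega, hrkG⟩⟩
  left_inv f := by
    obtain ⟨f, hf, rfl, rfl⟩ := f
    exact Subtype.ext (hf.addPathAt_removePath (hf.zero_zero_pos_of_weight_pos hk))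
  right_inv g := by
    obtain ⟨g, hg, hw, hrank⟩ := g
    exact Subtype.ext (hg.addPathAt_spec ht (hrank.imp hw.trans Nat.lt_succ_iff.1)).2.2.2

theorem isPlanePartition_zero : IsPlanePartition l a 0 :=
  ⟨fun _ _ => le_rfl, fun _ _ => le_rfl, fun _ _ _ => rfl, fun _ _ _ => rfl⟩

def extendBox (l a : ℕ) (F : Fin l → Fin a → ℕ) : ℕ → ℕ → ℕ :=
  fun x y => if h : x < l ∧ y < a then F ⟨x, h.1⟩ ⟨y, h.2⟩ else 0

theorem extendBox_apply (F : Fin l → Fin a → ℕ) (i : Fin l) (j : Fin a) :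
    extendBox l a F i j = F i j :=
  dif_pos ⟨i.2, j.2⟩

theorem IsPlanePartition.extendBox_restrict (hf : IsPlanePartition l a f) :
    extendBox l a (fun i j => f i j) = f := by
  funext x y
  rw [extendBox]
  split_ifs with h
  · rfl
  · rcases not_and_or.1 h with hx | hy
    · exact (hf.eq_zero_of_le_row x y (not_lt.1 hx)).symm
    · exact (hf.eq_zero_of_le_col x y (not_lt.1 hy)).symm

theorem weight_extendBox (F : Fin l → Fin a → ℕ) :
    weight l a (extendBox l a F) = ∑ i, ∑ j, F i j := by
  rw [weight, ← Fin.sum_univ_eq_sum_range]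
  refine sum_congr rfl fun i _ => ?_
  rw [← Fin.sum_univ_eq_sum_range]
  exact sum_congr rfl fun j _ => extendBox_apply F i j

theorem isPlanePartition_extendBox {F : Fin l → Fin a → ℕ}
    (hrow : ∀ i j j', j ≤ j' → F i j' ≤ F i j) (hcol : ∀ j i i', i ≤ i' → F i' j ≤ F i j) : IsPlanePartition l a (extendBox l a F) where
  row_succ_le x y := by
    unfold extendBox
    split_ifs with h h'
    · exact hcol _ _ _ (Fin.mk_le_mk.2 (Nat.le_succ x))
    · exact absurd ⟨by omega, h.2⟩ h'
    · exact Nat.zero_le _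
    · exact le_rfl
  col_succ_le x y := by
    unfold extendBox
    split_ifs with h h'
    · exact hrow _ _ _ (Fin.mk_le_mk.2 (Nat.le_succ y))
    · exact absurd ⟨h.1, by omega⟩ h'
    · exact Nat.zero_le _
    · exact le_rfl
  eq_zero_of_le_row x y hx := dif_neg fun h => by omega
  eq_zero_of_le_col x y hy := dif_neg fun h => by omega

theorem le_weight {x y : ℕ} (hx : x < l) (hy : y < a) : f x y ≤ weight l a f :=
  (single_le_sum (fun y _ => Nat.zero_le (f x y)) (mem_range.2 hy)).trans
    (single_le_sum (f := fun x => ∑ y ∈ range a, f x y) (fun _ _ => Nat.zero_le _)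
      (mem_range.2 hx))

theorem finite_isPlanePartition_weight (l a k : ℕ) :
    {f | IsPlanePartition l a f ∧ weight l a f = k}.Finite := by
  refine (Set.finite_range fun F : Fin l → Fin a → Fin (k + 1) =>
    extendBox l a fun i j => F i j).subset fun f ⟨hf, hw⟩ => ?_
  exact ⟨fun i j => ⟨f i j, Nat.lt_succ_of_le (hw ▸ le_weight i.2 j.2)⟩, hf.extendBox_restrict⟩

instance finite_subtype_isPlanePartition_weight (k : ℕ) (P : (ℕ → ℕ → ℕ) → Prop) :
    Finite {f : ℕ → ℕ → ℕ // IsPlanePartition l a f ∧ weight l a f = k ∧ P f} :=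
  ((finite_isPlanePartition_weight l a k).subset fun _ hf => ⟨hf.1, hf.2.1⟩).to_subtype

section Counting

variable {k t : ℕ}

theorem countBelowRank_zero_left (t : ℕ) : countBelowRank l a 0 t = 1 :=
  Nat.card_eq_one_iff_exists.2 ⟨⟨0, isPlanePartition_zero, by simp [weight], Or.inl rfl⟩,
    fun ⟨_, hg, hw, _⟩ => Subtype.ext (hg.eq_zero_of_weight_eq_zero hw)⟩

theorem countBelowRank_zero_right (hk : 0 < k) : countBelowRank l a k 0 = 0 :=
  Nat.card_eq_zero.2 (Or.inl ⟨fun ⟨_, _, _, h⟩ => by omega⟩)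

theorem countBelowRank_mul :
    countBelowRank l a k (l * a) =
      Nat.card {f : ℕ → ℕ → ℕ // IsPlanePartition l a f ∧ weight l a f = k} :=
  Nat.card_congr <| Equiv.subtypeEquivRight fun _ =>
    ⟨fun h => ⟨h.1, h.2.1⟩, fun ⟨hf, hw⟩ => ⟨hf, hw, (Nat.eq_zero_or_pos k).imp_right fun hk =>
      hf.pathRank_lt (hf.zero_zero_pos_of_weight_pos (hw ▸ hk))⟩⟩

theorem countBelowRank_succ (hk : 0 < k) (t : ℕ) :
    countBelowRank l a k (t + 1) = countBelowRank l a k t +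
      Nat.card {f : ℕ → ℕ → ℕ // IsPlanePartition l a f ∧ weight l a f = k ∧
        pathRank l a f = t} := by
  classical
  have hsplit := subtypeOrEquiv
    (fun f => IsPlanePartition l a f ∧ weight l a f = k ∧ (k = 0 ∨ pathRank l a f < t))
    (fun f => IsPlanePartition l a f ∧ weight l a f = k ∧ pathRank l a f = t)
    (Pi.disjoint_iff.2 fun f => Prop.disjoint_iff.2 fun ⟨⟨_, _, h⟩, ⟨_, _, h'⟩⟩ => by omega)
  rw [countBelowRank, countBelowRank, ← Nat.card_sum, ← Nat.card_congr hsplit]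
  refine Nat.card_congr <| Equiv.subtypeEquivRight fun f => ⟨fun ⟨hf, hw, h⟩ => ?_, ?_⟩
  · rcases Nat.lt_succ_iff_lt_or_eq.1 (h.resolve_left hk.ne') with h | h
    exacts [Or.inl ⟨hf, hw, Or.inr h⟩, Or.inr ⟨hf, hw, h⟩]
  · rintro (⟨hf, hw, h⟩ | ⟨hf, hw, h⟩)
    exacts [⟨hf, hw, h.imp_right Nat.lt_succ_of_lt⟩, ⟨hf, hw, Or.inr (h ▸ Nat.lt_succ_self t)⟩]

theorem card_pathRank_eq (hk : 0 < k) (ht : t < l * a) :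
    Nat.card {f : ℕ → ℕ → ℕ // IsPlanePartition l a f ∧ weight l a f = k ∧
        pathRank l a f = t} =
      if rankHook l t ≤ k then countBelowRank l a (k - rankHook l t) (t + 1) else 0 := by
  split_ifs with hh
  · exact Nat.card_congr (removePathEquiv hk ht hh)
  · refine Nat.card_eq_zero.2 (Or.inl ⟨fun ⟨_, hf, hw, hrk⟩ => hh ?_⟩)
    have := hf.weight_eq_add_rankHook (hf.zero_zero_pos_of_weight_pos (by omega))
    rw [hrk] at this
    omega

end Counting

section GeneratingFunction

variable {R : Type*} [CommRing R]

theorem mk_countBelowRank_succ_mul {t : ℕ} (ht : t < l * a) :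
    (PowerSeries.mk fun k => (countBelowRank l a k (t + 1) : R)) * (1 - X ^ rankHook l t) =
      PowerSeries.mk fun k => (countBelowRank l a k t : R) := by
  ext k
  rw [mul_sub, mul_one, map_sub, coeff_mul_X_pow']
  simp only [coeff_mk]
  rcases Nat.eq_zero_or_pos k with rfl | hk
  · have hh : ¬ rankHook l t ≤ 0 := Nat.not_succ_le_zero _
    rw [if_neg hh, countBelowRank_zero_left, countBelowRank_zero_left, sub_zero]
  · rw [countBelowRank_succ hk, card_pathRank_eq hk ht]
    split_ifs <;> push_cast <;> ring

theorem mk_countBelowRank_mul_prod {t : ℕ} (ht : t ≤ l * a) :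
    (PowerSeries.mk fun k => (countBelowRank l a k t : R)) *
      ∏ ρ ∈ range t, (1 - X ^ rankHook l ρ) = 1 := by
  induction t with
  | zero =>
    ext k
    rw [prod_range_zero, mul_one, coeff_mk, coeff_one]
    rcases Nat.eq_zero_or_pos k with rfl | hk
    · simp [countBelowRank_zero_left]
    · simp [countBelowRank_zero_right hk, hk.ne']
  | succ t ih =>
    rw [prod_range_succ, mul_comm _ (1 - X ^ rankHook l t), ← mul_assoc,
      mk_countBelowRank_succ_mul (by omega), ih (by omega)]

end GeneratingFunction

section HookProducts

variable {M : Type*} [CommMonoid M] (F : ℕ → M)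

theorem prod_range_mul_eq (G : ℕ → M) (a l : ℕ) :
    ∏ ρ ∈ range (a * l), G ρ = ∏ c ∈ range a, ∏ j ∈ range l, G (c * l + j) := by
  induction a with
  | zero => simp
  | succ a ih => rw [Nat.succ_mul, prod_range_add, ih, prod_range_succ]

theorem prod_range_rankHook (l a : ℕ) :
    ∏ ρ ∈ range (l * a), F (rankHook l ρ) = ∏ i ∈ range l, ∏ j ∈ range a, F (i + j + 1) :=
  calc ∏ ρ ∈ range (l * a), F (rankHook l ρ)
      = ∏ c ∈ range a, ∏ j ∈ range l, F (rankHook l (c * l + j)) := by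
        rw [Nat.mul_comm, prod_range_mul_eq]
    _ = ∏ c ∈ range a, ∏ i ∈ range l, F (i + c + 1) := prod_congr rfl fun c _ => by
        rw [← prod_range_reflect]
        exact prod_congr rfl fun j hj => congrArg F (rankHook_encodeRank (mem_range.1 hj))
    _ = _ := prod_comm

theorem card_filter_add_one_eq (l a b : ℕ) :
    #{p ∈ range l ×ˢ range a | p.1 + p.2 + 1 = b} = min a b - (b - l) := by
  have hfiber : {p ∈ range l ×ˢ range a | p.1 + p.2 + 1 = b} =
      (Ico (b - l) (min a b)).image fun j => (b - 1 - j, j) := by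
    ext ⟨i, j⟩
    simp only [mem_filter, mem_product, mem_range, mem_image, mem_Ico, Prod.mk.injEq]
    constructor
    · rintro ⟨⟨hi, hj⟩, rfl⟩
      exact ⟨j, ⟨by omega, by omega⟩, by omega, rfl⟩
    · rintro ⟨j', ⟨h1, h2⟩, rfl, rfl⟩
      omega
  rw [hfiber, card_image_of_injective _ fun _ _ h => (Prod.ext_iff.1 h).2, Nat.card_Ico]

theorem prod_range_add_one_eq_prod_pow (l a : ℕ) :
    ∏ i ∈ range l, ∏ j ∈ range a, F (i + j + 1) =
      ∏ b ∈ Icc 1 (l + a), F b ^ (min a b - (b - l)) := by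
  rw [← prod_product', ← prod_fiberwise_of_maps_to' (t := Icc 1 (l + a))
    (g := fun p : ℕ × ℕ => p.1 + p.2 + 1) fun p hp => by
      simp only [mem_product, mem_range] at hp
      simp only [mem_Icc]
      omega]
  exact prod_congr rfl fun b _ => by rw [prod_const, card_filter_add_one_eq]

theorem prod_Icc_min_max_eq_prod_pow (l a : ℕ) :
    (∏ j ∈ Icc (min a l) (max a l), F j ^ min a l) *
        ∏ i ∈ Icc 1 (min a l - 1), (F i ^ i * F (max a l + i) ^ (min a l - i)) =
      ∏ b ∈ Icc 1 (l + a), F b ^ (min a b - (b - l)) := by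
  rcases Nat.eq_zero_or_pos (min a l) with h0 | hpos
  · have hI : Icc 1 (min a l - 1) = ∅ := Icc_eq_empty (by omega)
    rw [hI, prod_empty, mul_one, h0]
    simp only [pow_zero, prod_const_one]
    exact (prod_eq_one fun b _ => by rw [show min a b - (b - l) = 0 by omega, pow_zero]).symm
  have hI : Icc 1 (min a l - 1) = Ico 1 (min a l) := by
    rw [← Ico_add_one_right_eq_Icc, Nat.sub_add_cancel (show 1 ≤ min a l from hpos)]
  have hmid : ∏ j ∈ Icc (min a l) (max a l), F j ^ min a l =
      ∏ b ∈ Ico (min a l) (max a l + 1), F b ^ (min a b - (b - l)) := by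
    rw [← Ico_add_one_right_eq_Icc]
    exact prod_congr rfl fun b hb => by rw [mem_Ico] at hb; congr 1; omega
  have hlow : ∏ i ∈ Icc 1 (min a l - 1), F i ^ i =
      ∏ b ∈ Ico 1 (min a l), F b ^ (min a b - (b - l)) := by
    rw [hI]
    exact prod_congr rfl fun b hb => by rw [mem_Ico] at hb; congr 1; omega
  have hhigh : ∏ i ∈ Icc 1 (min a l - 1), F (max a l + i) ^ (min a l - i) =
      ∏ b ∈ Ico (max a l + 1) (max a l + min a l), F b ^ (min a b - (b - l)) := by
    rw [hI, Nat.add_comm (max a l) 1, Nat.add_comm (max a l) (min a l), ← prod_Ico_add']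
    exact prod_congr rfl fun i hi => by
      rw [mem_Ico] at hi
      rw [Nat.add_comm i]
      congr 1
      omega
  have htop : ∏ b ∈ Ico (max a l + min a l) (l + a + 1), F b ^ (min a b - (b - l)) = 1 :=
    prod_eq_one fun b hb => by
      rw [mem_Ico] at hb
      rw [show min a b - (b - l) = 0 by omega, pow_zero]
  rw [prod_mul_distrib, hmid, hlow, hhigh, ← Ico_add_one_right_eq_Icc,
    ← prod_Ico_consecutive _ (show 1 ≤ max a l + min a l by omega)
      (show max a l + min a l ≤ l + a + 1 by omega), htop, mul_one,
    ← prod_Ico_consecutive _ (show 1 ≤ max a l + 1 by omega)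
      (show max a l + 1 ≤ max a l + min a l by omega),
    ← prod_Ico_consecutive _ hpos (show min a l ≤ max a l + 1 by omega)]
  rw [mul_left_comm, mul_assoc]

end HookProducts

theorem rectPlanePartitionCount_eq_card (l a k : ℕ) :
    rectPlanePartitionCount l a k =
      Nat.card {f : ℕ → ℕ → ℕ // IsPlanePartition l a f ∧ weight l a f = k} :=
  Nat.card_congr
    { toFun := fun F => ⟨extendBox l a F.1, isPlanePartition_extendBox F.2.1 F.2.2.1,
        (weight_extendBox F.1).trans F.2.2.2⟩
      invFun := fun f => ⟨fun i j => f.1 i j, fun i _ _ h => f.2.1.antitone_col i h,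
        fun j _ _ h => f.2.1.antitone_row j h,
        (weight_extendBox _).symm.trans (f.2.1.extendBox_restrict.symm ▸ f.2.2)⟩
      left_inv := fun F => Subtype.ext (funext fun i => funext fun j => extendBox_apply F.1 i j)
      right_inv := fun f => Subtype.ext f.2.1.extendBox_restrict }

end RectPlanePartition

open RectPlanePartition

theorem rectPlanePartition_genFun (l a : ℕ) :
    (PowerSeries.mk fun k => (rectPlanePartitionCount l a k : ℚ)) *
        ((∏ j ∈ Finset.Icc (min a l) (max a l), (1 - X ^ j) ^ (min a l)) *
          ∏ i ∈ Finset.Icc 1 (min a l - 1),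
            ((1 - X ^ i) ^ i * (1 - X ^ (max a l + i)) ^ (min a l - i))) = 1 := by
  have hbox := mk_countBelowRank_mul_prod (R := ℚ) (le_refl (l * a))
  rw [prod_range_rankHook (fun j => (1 : ℚ⟦X⟧) - X ^ j),
    prod_range_add_one_eq_prod_pow (fun j => (1 : ℚ⟦X⟧) - X ^ j),
    ← prod_Icc_min_max_eq_prod_pow (fun j => (1 : ℚ⟦X⟧) - X ^ j)] at hbox
  simpa only [rectPlanePartitionCount_eq_card, countBelowRank_mul] using hbox
end

section
/- Fix a ≥ 1 and let p_a(k) be the number of plane partitions of k fitting inside a 2 × a rectangle. Then the sequence k ↦ p_a(k) is weakly increasing in k. -/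
def planePartitions (a k : ℕ) : Set (Fin 2 → Fin a → ℕ) :=
  {f | (∀ i : Fin 2, ∀ j j' : Fin a, j ≤ j' → f i j' ≤ f i j) ∧
    (∀ j : Fin a, f 1 j ≤ f 0 j) ∧
    ∑ i, ∑ j, f i j = k}

namespace planePartitions

variable {a k n : ℕ}

theorem ncard_eq (a k : ℕ) : (planePartitions a k).ncard = planePartitionCount a k := rfl

theorem entry_le {f : Fin 2 → Fin a → ℕ} (hf : f ∈ planePartitions a k) (i : Fin 2) (j : Fin a) :
    f i j ≤ k :=
  calc f i j ≤ ∑ j', f i j' := Finset.single_le_sum (fun _ _ ↦ Nat.zero_le _) (Finset.mem_univ j)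
    _ ≤ ∑ i', ∑ j', f i' j' :=
      Finset.single_le_sum (f := fun i' ↦ ∑ j', f i' j') (fun _ _ ↦ Nat.zero_le _)
        (Finset.mem_univ i)
    _ = k := hf.2.2

theorem finite (a k : ℕ) : (planePartitions a k).Finite :=
  (Set.Finite.pi' fun _ ↦ Set.Finite.pi' fun _ ↦ Set.finite_Iic k).subset
    fun _ hf i j ↦ entry_le hf i j

theorem add_mem {f g : Fin 2 → Fin a → ℕ} (hf : f ∈ planePartitions a k)
    (hg : g ∈ planePartitions a n) : f + g ∈ planePartitions a (k + n) := by
  obtain ⟨hf_row, hf_col, hf_sum⟩ := hf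
  obtain ⟨hg_row, hg_col, hg_sum⟩ := hg
  refine ⟨fun i j j' hjj' ↦ add_le_add (hf_row i j j' hjj') (hg_row i j j' hjj'),
    fun j ↦ add_le_add (hf_col j) (hg_col j), ?_⟩
  simp only [Pi.add_apply, Finset.sum_add_distrib, hf_sum, hg_sum]

theorem single_corner_mem (ha : 0 < a) :
    Pi.single 0 (Pi.single ⟨0, ha⟩ 1) ∈ planePartitions a 1 := by
  refine ⟨fun i j j' hjj' ↦ ?_, fun j ↦ ?_, ?_⟩
  · obtain rfl | hj' := eq_or_ne j' ⟨0, ha⟩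
    · rw [show j = ⟨0, ha⟩ from Fin.ext (Nat.le_zero.mp hjj')]
    · fin_cases i <;> simp [hj']
  · simp [Pi.single_apply]
  · simp [Fin.sum_univ_two]

end planePartitions

theorem planePartitionCount_le_add {a k n : ℕ} (h : (planePartitions a n).Nonempty) :
    planePartitionCount a k ≤ planePartitionCount a (k + n) := by
  obtain ⟨g, hg⟩ := h
  rw [← planePartitions.ncard_eq, ← planePartitions.ncard_eq,
    ← Set.ncard_image_of_injective _ (add_left_injective g)]
  exact Set.ncard_le_ncard (Set.image_subset_iff.mpr fun _ hf ↦ planePartitions.add_mem hf hg)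
    (planePartitions.finite a (k + n))

theorem planePartitionCount_monotone_in_k (a : ℕ) (ha : 1 ≤ a) :
    Monotone (fun k => planePartitionCount a k) :=
  monotone_nat_of_le_succ fun _ ↦
    planePartitionCount_le_add ⟨_, planePartitions.single_corner_mem ha⟩
end

section
/- Let ℓ = lcm(1,...,a+1) and P_a(x) = (1-x^ℓ)^{2a} / ((1-x)(1-x²)²···(1-xᵃ)²(1-x^{a+1})), a polynomial of degree d = 2ℓa - a(a+2). Then the coefficients of P_a are nonnegative and palindromic: the coefficient of x^i equals the coefficient of x^{d-i} for all 0 ≤ i ≤ d. -/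
/-!
Every `j ≤ a + 1` divides `ℓ`, so `(1 - X^ℓ) / (1 - X^j) = 1 + X^j + ⋯ + X^(ℓ-j)` is a polynomial with
coefficients in `ℕ`, palindromic of degree `ℓ - j`. The numerator `(1 - X^ℓ)^(2a)` supplies one factor
`1 - X^ℓ` for each of the `2a` factors of the denominator, so `P_a` is the image of a product of such
geometric sums in `ℕ[X]`. A product of palindromic polynomials is palindromic of the summed degree, and
`(ℓ - 1) + 2 ∑_{j=2}^{a} (ℓ - j) + (ℓ - a - 1) = 2ℓa - a(a+2)`.
-/

open Polynomial Finset

namespace Polynomial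

section Semiring

variable {R : Type*} [Semiring R]

def IsPalindromic (N : ℕ) (p : R[X]) : Prop :=
  p.natDegree ≤ N ∧ reflect N p = p

theorem isPalindromic_one : IsPalindromic 0 (1 : R[X]) :=
  ⟨by simp, by simp⟩

theorem IsPalindromic.mul {M N : ℕ} {p q : R[X]} (hp : IsPalindromic M p)
    (hq : IsPalindromic N q) : IsPalindromic (M + N) (p * q) :=
  ⟨natDegree_mul_le.trans (add_le_add hp.1 hq.1), by rw [reflect_mul _ _ hp.1 hq.1, hp.2, hq.2]⟩

theorem IsPalindromic.pow {N : ℕ} {p : R[X]} (hp : IsPalindromic N p) (n : ℕ) :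
    IsPalindromic (n * N) (p ^ n) := by
  induction n with
  | zero => simpa using isPalindromic_one
  | succ n ih => rw [pow_succ, Nat.succ_mul]; exact ih.mul hp

theorem IsPalindromic.coeff_eq_coeff_sub {N : ℕ} {p : R[X]} (hp : IsPalindromic N p) {i : ℕ}
    (hi : i ≤ N) : p.coeff i = p.coeff (N - i) := by
  rw [← revAt_le hi, ← coeff_reflect, hp.2]

theorem reflect_sum {ι : Type*} (N : ℕ) (s : Finset ι) (f : ι → R[X]) :
    reflect N (∑ i ∈ s, f i) = ∑ i ∈ s, reflect N (f i) :=
  map_sum (⟨⟨reflect N, reflect_zero⟩, fun p q => reflect_add p q N⟩ : R[X] →+ R[X]) f s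

theorem isPalindromic_geom_sum_X_pow (j c : ℕ) :
    IsPalindromic (j * (c - 1)) (∑ k ∈ range c, (X ^ j : R[X]) ^ k) := by
  simp_rw [← pow_mul]
  have hle : ∀ k ∈ range c, j * k ≤ j * (c - 1) := fun k hk =>
    Nat.mul_le_mul_left j (by rw [mem_range] at hk; omega)
  refine ⟨natDegree_sum_le_of_forall_le _ _ fun k hk => (natDegree_X_pow_le _).trans (hle k hk), ?_⟩
  rw [reflect_sum, ← sum_range_reflect (fun k => (X : R[X]) ^ (j * k))]
  refine sum_congr rfl fun k hk => ?_
  rw [reflect_monomial, revAt_le (hle k hk), ← Nat.mul_sub, Nat.sub_sub, Nat.add_comm 1 k,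
    ← Nat.sub_sub]

theorem isPalindromic_geom_sum_X_pow_of_dvd {j ℓ : ℕ} (h : j ∣ ℓ) :
    IsPalindromic (ℓ - j) (∑ k ∈ range (ℓ / j), (X ^ j : R[X]) ^ k) := by
  simpa [Nat.mul_sub_one, Nat.mul_div_cancel' h] using
    isPalindromic_geom_sum_X_pow (R := R) j (ℓ / j)

end Semiring

theorem IsPalindromic.prod {R ι : Type*} [CommSemiring R] {s : Finset ι} {N : ι → ℕ}
    {f : ι → R[X]} (h : ∀ i ∈ s, IsPalindromic (N i) (f i)) :
    IsPalindromic (∑ i ∈ s, N i) (∏ i ∈ s, f i) := by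
  induction s using Finset.cons_induction with
  | empty => simpa using isPalindromic_one
  | cons i s hi ih =>
    rw [prod_cons, sum_cons]
    exact (h i (mem_cons_self i s)).mul (ih fun k hk => h k (mem_cons_of_mem hk))

theorem one_sub_X_pow_mul_geom_sum_of_dvd {R : Type*} [CommRing R] {j ℓ : ℕ} (h : j ∣ ℓ) :
    (1 - X ^ j) * ∑ k ∈ range (ℓ / j), (X ^ j : R[X]) ^ k = 1 - X ^ ℓ := by
  rw [mul_neg_geom_sum, ← pow_mul, Nat.mul_div_cancel' h]

end Polynomial

theorem mul_prod_Icc_sq_mul_eq_pow {M : Type*} [CommMonoid M] {a : ℕ} (ha : 1 ≤ a) {f g : ℕ → M}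
    {c : M} (h : ∀ j ∈ Icc 1 (a + 1), f j * g j = c) :
    (f 1 * (∏ j ∈ Icc 2 a, f j ^ 2) * f (a + 1)) * (g 1 * (∏ j ∈ Icc 2 a, g j ^ 2) * g (a + 1)) =
      c ^ (2 * a) := by
  have hmid : ∏ j ∈ Icc 2 a, (f j * g j) ^ 2 = c ^ (2 * (a - 1)) := by
    rw [prod_congr rfl fun j hj => by rw [h j (by simp at hj ⊢; omega)], prod_const,
      Nat.card_Icc, ← pow_mul]
    exact congrArg _ (by omega)
  calc (f 1 * (∏ j ∈ Icc 2 a, f j ^ 2) * f (a + 1)) * (g 1 * (∏ j ∈ Icc 2 a, g j ^ 2) * g (a + 1))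
      = (f 1 * g 1) * (∏ j ∈ Icc 2 a, (f j * g j) ^ 2) * (f (a + 1) * g (a + 1)) := by
        simp only [mul_pow, prod_mul_distrib]; ac_rfl
    _ = c * c ^ (2 * (a - 1)) * c := by
        rw [hmid, h 1 (by simp), h (a + 1) (by simp)]
    _ = c ^ (2 * a) := by
        rw [← pow_succ', ← pow_succ]; congr 1; omega

theorem sub_one_add_sum_Icc_add_sub_eq {ℓ a : ℕ} (ha : 1 ≤ a) (hℓ : a + 1 ≤ ℓ) :
    (ℓ - 1) + ∑ j ∈ Icc 2 a, 2 * (ℓ - j) + (ℓ - (a + 1)) = 2 * ℓ * a - a * (a + 2) := by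
  induction a, ha using Nat.le_induction with
  | base => rw [Icc_eq_empty (by omega), sum_empty]; omega
  | succ n hn ih =>
    have hquad : n * (n + 2) ≤ 2 * ℓ * n := by nlinarith
    rw [sum_Icc_succ_top (by omega), show 2 * ℓ * (n + 1) = 2 * ℓ * n + 2 * ℓ by ring,
      show (n + 1) * (n + 1 + 2) = n * (n + 2) + 2 * n + 3 by ring]
    have := ih (by omega)
    omega

theorem clearedGenFun_coeffs_nonneg_palindrome (a : ℕ) (ha : 1 ≤ a)
    (ℓ : ℕ) (hℓ : ℓ = Finset.lcm (Finset.Icc 1 (a + 1)) id)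
    (P : Polynomial ℚ)
    (hP : P * ((1 - X) * (∏ j ∈ Finset.Icc 2 a, (1 - X ^ j) ^ 2) * (1 - X ^ (a + 1))) =
      (1 - X ^ ℓ) ^ (2 * a)) :
    (∀ i : ℕ, 0 ≤ P.coeff i) ∧
      ∀ i : ℕ, i ≤ 2 * ℓ * a - a * (a + 2) →
        P.coeff i = P.coeff (2 * ℓ * a - a * (a + 2) - i) := by
  have hdvd : ∀ j ∈ Icc 1 (a + 1), j ∣ ℓ := fun j hj => hℓ ▸ dvd_lcm hj
  have hℓ0 : ℓ ≠ 0 := hℓ ▸ lcm_ne_zero_iff.2 fun j hj => Nat.one_le_iff_ne_zero.1 (mem_Icc.1 hj).1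
  have hℓa : a + 1 ≤ ℓ := Nat.le_of_dvd (Nat.pos_of_ne_zero hℓ0) (hdvd _ (by simp))
  let G (j : ℕ) : ℕ[X] := ∑ k ∈ range (ℓ / j), (X ^ j) ^ k
  let Q : ℕ[X] := G 1 * (∏ j ∈ Icc 2 a, G j ^ 2) * G (a + 1)
  have hclear := mul_prod_Icc_sq_mul_eq_pow ha (f := fun j => (1 - X ^ j : ℚ[X]))
    (g := fun j => (G j).map (Nat.castRingHom ℚ)) (c := 1 - X ^ ℓ)
    fun j hj => by
      simpa [G, Polynomial.map_sum] using one_sub_X_pow_mul_geom_sum_of_dvd (R := ℚ) (hdvd j hj)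
  simp only [pow_one, ← Polynomial.map_pow, ← Polynomial.map_prod, ← Polynomial.map_mul] at hclear
  have hden : (1 - X ^ ℓ : ℚ[X]) ^ (2 * a) ≠ 0 :=
    pow_ne_zero _ fun h => by simpa [hℓ0] using congrArg (eval 0) h
  obtain rfl : P = Q.map (Nat.castRingHom ℚ) :=
    mul_right_cancel₀ (left_ne_zero_of_mul (hclear ▸ hden)) (hP.trans (by rw [← hclear, mul_comm]))
  have hQ : IsPalindromic (2 * ℓ * a - a * (a + 2)) Q := by
    rw [← sub_one_add_sum_Icc_add_sub_eq ha hℓa]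
    refine ((isPalindromic_geom_sum_X_pow_of_dvd (hdvd 1 (by simp))).mul
      (IsPalindromic.prod fun j hj => ?_)).mul
      (isPalindromic_geom_sum_X_pow_of_dvd (hdvd (a + 1) (by simp)))
    exact (isPalindromic_geom_sum_X_pow_of_dvd (hdvd j (by simp at hj ⊢; omega))).pow 2
  refine ⟨fun i => ?_, fun i hi => ?_⟩ <;> simp only [coeff_map, eq_natCast]
  · exact Nat.cast_nonneg _
  · rw [hQ.coeff_eq_coeff_sub hi]
end

section
/- For all k ≡ 0 mod 6, the number of plane partitions of k fitting inside a 2 × 2 rectangle equals k³/72 + k²/6 + 2k/3 + 1. -/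
/-!
The map `[[a, b], [c, d]] ↦ (b + d - min b c, c + d - min b c, min b c - d)`, with inverse
`(y, z, w) ↦ [[k - (y + z + 2w + min y z), y + w], [z + w, min y z]]`, identifies the plane
partitions of `k` in a `2 × 2` box with the lattice points `(y, z, w)` satisfying
`2y + 2z + 3w ≤ k` (MacMahon's generating function `1 / ((1 - q)(1 - q²)²(1 - q³))`).
Counting these points for `k + 3`, those with `w = 0` are the `T(⌊(k + 3)/2⌋)` points with
`y + z ≤ ⌊(k + 3)/2⌋`, where `T(n) = (n + 1)(n + 2)/2`, and the others are the points for `k`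
shifted by one in `w`. So the count for `6m` grows by `T(3m + 1) + T(3m + 3) = 9m² + 21m + 13`
from `m` to `m + 1`, which sums to `3m³ + 6m² + 4m + 1`.
-/

open Finset

namespace PlanePartitionTwoTwo

-- `(a, b, c, d)` stands for the plane partition `[[a, b], [c, d]]`.
def quadruples (k : ℕ) : Finset (ℕ × ℕ × ℕ × ℕ) :=
  (range (k + 1) ×ˢ range (k + 1) ×ˢ range (k + 1) ×ˢ range (k + 1)).filter
    fun x => x.2.1 ≤ x.1 ∧ x.2.2.1 ≤ x.1 ∧ x.2.2.2 ≤ x.2.1 ∧ x.2.2.2 ≤ x.2.2.1 ∧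
      x.1 + x.2.1 + x.2.2.1 + x.2.2.2 = k

def simplex (k : ℕ) : Finset (ℕ × ℕ × ℕ) :=
  (range (k + 1) ×ˢ range (k + 1) ×ˢ range (k + 1)).filter
    fun p => 2 * p.1 + 2 * p.2.1 + 3 * p.2.2 ≤ k

@[simp]
lemma mem_quadruples {k : ℕ} {x : ℕ × ℕ × ℕ × ℕ} :
    x ∈ quadruples k ↔ x.2.1 ≤ x.1 ∧ x.2.2.1 ≤ x.1 ∧ x.2.2.2 ≤ x.2.1 ∧ x.2.2.2 ≤ x.2.2.1 ∧
      x.1 + x.2.1 + x.2.2.1 + x.2.2.2 = k := by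
  simp only [quadruples, mem_filter, mem_product, mem_range]
  omega

@[simp]
lemma mem_simplex {k : ℕ} {p : ℕ × ℕ × ℕ} :
    p ∈ simplex k ↔ 2 * p.1 + 2 * p.2.1 + 3 * p.2.2 ≤ k := by
  simp only [simplex, mem_filter, mem_product, mem_range]
  omega

lemma planePartitionCount_two_eq_card_quadruples (k : ℕ) :
    planePartitionCount 2 k = #(quadruples k) := by
  rw [planePartitionCount, ← Nat.card_eq_finsetCard]
  refine Nat.card_congr
    { toFun := fun f => ⟨(f.1 0 0, f.1 0 1, f.1 1 0, f.1 1 1), ?_⟩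
      invFun := fun x => ⟨![![x.1.1, x.1.2.1], ![x.1.2.2.1, x.1.2.2.2]], ?_⟩
      left_inv := fun f => Subtype.ext (funext fun i => funext fun j => ?_)
      right_inv := fun x => rfl }
  · obtain ⟨f, hrow, hcol, hsum⟩ := f
    simp only [Fin.sum_univ_two] at hsum
    simp only [mem_quadruples]
    exact ⟨hrow 0 0 1 (by decide), hcol 0, hcol 1, hrow 1 0 1 (by decide), by omega⟩
  · obtain ⟨⟨a, b, c, d⟩, hx⟩ := x
    simp only [mem_quadruples] at hx
    refine ⟨fun i j j' hjj' => ?_, fun j => ?_, ?_⟩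
    · fin_cases i <;> fin_cases j <;> fin_cases j' <;> simp_all
    · fin_cases j <;> simp_all
    · simp_all [Fin.sum_univ_two, ← add_assoc]
  · fin_cases i <;> fin_cases j <;> rfl

lemma card_quadruples_eq_card_simplex (k : ℕ) : #(quadruples k) = #(simplex k) := by
  refine card_nbij'
    (fun x => (x.2.1 + x.2.2.2 - min x.2.1 x.2.2.1, x.2.2.1 + x.2.2.2 - min x.2.1 x.2.2.1,
      min x.2.1 x.2.2.1 - x.2.2.2))
    (fun p => (k - (p.1 + p.2.1 + 2 * p.2.2 + min p.1 p.2.1), p.1 + p.2.2, p.2.1 + p.2.2,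
      min p.1 p.2.1))
    ?_ ?_ ?_ ?_ <;> intro p hp <;>
    simp only [SetLike.mem_coe, mem_quadruples, mem_simplex, Prod.ext_iff] at hp ⊢ <;> omega

def triangle (n : ℕ) : Finset (ℕ × ℕ) :=
  (range (n + 1) ×ˢ range (n + 1)).filter fun p => p.1 + p.2 ≤ n

@[simp]
lemma mem_triangle {n : ℕ} {p : ℕ × ℕ} : p ∈ triangle n ↔ p.1 + p.2 ≤ n := by
  simp only [triangle, mem_filter, mem_product, mem_range]
  omega

lemma card_triangle_succ (n : ℕ) : #(triangle (n + 1)) = #(triangle n) + (n + 2) := by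
  have hlow : (triangle (n + 1)).filter (fun p => p.1 + p.2 ≤ n) = triangle n := by
    ext p; simp only [mem_filter, mem_triangle]; omega
  have hdiag :
      (triangle (n + 1)).filter (fun p => ¬ p.1 + p.2 ≤ n) = antidiagonal (n + 1) := by
    ext p; simp only [mem_filter, mem_triangle, HasAntidiagonal.mem_antidiagonal]; omega
  rw [← card_filter_add_card_filter_not (fun p => p.1 + p.2 ≤ n), hlow, hdiag,
    Nat.card_antidiagonal]

lemma two_mul_card_triangle (n : ℕ) : 2 * #(triangle n) = (n + 1) * (n + 2) := by
  induction n with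
  | zero => decide
  | succ n ih => rw [card_triangle_succ]; linarith

lemma card_simplex_add_three (k : ℕ) :
    #(simplex (k + 3)) = #(simplex k) + #(triangle ((k + 3) / 2)) := by
  have hpos : #((simplex (k + 3)).filter fun p => ¬p.2.2 = 0) = #(simplex k) := by
    refine card_nbij' (fun p => (p.1, p.2.1, p.2.2 - 1)) (fun p => (p.1, p.2.1, p.2.2 + 1))
      ?_ ?_ ?_ ?_ <;> intro p hp <;>
      simp only [SetLike.mem_coe, mem_filter, mem_simplex, Prod.ext_iff, true_and] at hp ⊢ <;> omega
  have hzero : #((simplex (k + 3)).filter fun p => p.2.2 = 0) = #(triangle ((k + 3) / 2)) := by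
    refine card_nbij' (fun p => (p.1, p.2.1)) (fun p => (p.1, p.2, 0))
      ?_ ?_ ?_ ?_ <;> intro p hp <;>
      simp only [SetLike.mem_coe, mem_filter, mem_simplex, mem_triangle, Prod.ext_iff, true_and,
        and_true] at hp ⊢ <;> omega
  rw [← card_filter_add_card_filter_not (fun p => p.2.2 = 0), hzero, hpos, add_comm]

lemma card_simplex_six_mul (m : ℕ) : #(simplex (6 * m)) = 3 * m ^ 3 + 6 * m ^ 2 + 4 * m + 1 := by
  induction m with
  | zero => rfl
  | succ m ih =>
    have h₁ := card_simplex_add_three (6 * m)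
    have h₂ := card_simplex_add_three (6 * m + 3)
    have t₁ := two_mul_card_triangle (3 * m + 1)
    have t₃ := two_mul_card_triangle (3 * m + 3)
    rw [show (6 * m + 3) / 2 = 3 * m + 1 by omega] at h₁
    rw [show 6 * m + 3 + 3 = 6 * (m + 1) by ring,
      show 6 * (m + 1) / 2 = 3 * m + 3 by omega] at h₂
    linarith

end PlanePartitionTwoTwo

open PlanePartitionTwoTwo

theorem planePartitionCount_two_two_mod_zero (k : ℕ) (hk : k % 6 = 0) :
    (planePartitionCount 2 k : ℚ) =
      (k : ℚ) ^ 3 / 72 + (k : ℚ) ^ 2 / 6 + 2 * (k : ℚ) / 3 + 1 := by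
  obtain ⟨m, rfl⟩ : ∃ m, k = 6 * m := ⟨k / 6, by omega⟩
  rw [planePartitionCount_two_eq_card_quadruples, card_quadruples_eq_card_simplex,
    card_simplex_six_mul]
  push_cast
  ring
end

section
/- For all k ≥ 0, the number of plane partitions of k fitting inside a 2 × 2 rectangle equals the quasipolynomial k³/72 + k²/6 + c₁(k mod 6)·k + c₀(k mod 6) with (c₁,c₀) = (2/3,1), (13/24,5/18), (2/3,8/9), (13/24,1/2), (2/3,7/9), (13/24,7/18) for residues 0,1,2,3,4,5 respectively. -/
open Finset

def ppS (k : ℕ) : Finset (ℕ × ℕ × ℕ × ℕ) :=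
  ((range (k+1)) ×ˢ (range (k+1)) ×ˢ (range (k+1)) ×ˢ (range (k+1))).filter
    (fun x => x.2.1 ≤ x.1 ∧ x.2.2.1 ≤ x.1 ∧ x.2.2.2 ≤ x.2.1 ∧ x.2.2.2 ≤ x.2.2.1 ∧
      x.1 + x.2.1 + x.2.2.1 + x.2.2.2 = k)

lemma pp_count_eq (k : ℕ) : planePartitionCount 2 k = (ppS k).card := by
  rw [planePartitionCount, ← Nat.card_eq_finsetCard]
  apply Nat.card_congr
  refine ⟨fun f => ⟨(f.1 0 0, f.1 0 1, f.1 1 0, f.1 1 1), ?_⟩,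
    fun x => ⟨fun i j => if i = 0 then (if j = 0 then x.1.1 else x.1.2.1)
                         else (if j = 0 then x.1.2.2.1 else x.1.2.2.2), ?_⟩, ?_, ?_⟩
  · obtain ⟨f, h1, h2, h3⟩ := f
    simp only [Fin.sum_univ_two] at h3
    have hba := h1 0 0 1 (by decide)
    have hdc := h1 1 0 1 (by decide)
    have hca := h2 0
    have hdb := h2 1
    simp only [ppS, mem_filter, mem_product, mem_range, and_true, true_and, ne_eq]
    refine ⟨⟨?_, ?_, ?_, ?_⟩, hba, hca, hdb, hdc, by omega⟩ <;> omega
  · obtain ⟨⟨a, b, c, d⟩, hx⟩ := x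
    simp only [ppS, mem_filter, mem_product, mem_range, and_true, true_and, ne_eq] at hx
    obtain ⟨-, hba, hca, hdb, hdc, hsum⟩ := hx
    refine ⟨?_, ?_, ?_⟩
    · intro i j j' hjj'
      fin_cases i <;> fin_cases j <;> fin_cases j' <;> simp_all <;> omega
    · intro j
      fin_cases j <;> simp <;> omega
    · simp [Fin.sum_univ_two]; omega
  · rintro ⟨f, hf⟩
    ext i j
    fin_cases i <;> fin_cases j <;> simp
  · rintro ⟨⟨a, b, c, d⟩, hx⟩
    simp

def ppR (n : ℕ) : Finset (ℕ × ℕ × ℕ) :=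
  ((range (n+1)) ×ˢ (range (n+1)) ×ˢ (range (n+1))).filter
    (fun x => 2*x.1 + 3*x.2.1 + 4*x.2.2 ≤ n)

def ppR' (n : ℕ) : Finset (ℕ × ℕ × ℕ) :=
  ((range (n+1)) ×ˢ (range (n+1)) ×ˢ (range (n+1))).filter
    (fun x => 2*x.1 + 3*x.2.1 + 4*x.2.2 + 2 ≤ n)

def ppP3 (n : ℕ) : ℕ := (ppR n).card

lemma ppS_card (k : ℕ) : (ppS k).card = ppP3 k + (ppR' k).card := by
  classical
  rw [← Finset.card_filter_add_card_filter_not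
    (s := ppS k) (p := fun x => x.2.2.1 ≤ x.2.1)]
  congr 1
  · -- c ≤ b part ↔ ppR k
    rw [ppP3]
    apply Finset.card_bij (fun x _ => (x.2.1 - x.2.2.1, x.2.2.1 - x.2.2.2, x.2.2.2))
    · rintro ⟨a, b, c, d⟩ hx
      simp only [ppS, mem_filter, mem_product, mem_range, and_true, true_and, ne_eq] at hx
      simp only [ppR, mem_filter, mem_product, mem_range, and_true, true_and, ne_eq]
      omega
    · rintro ⟨a, b, c, d⟩ hx ⟨a', b', c', d'⟩ hy h
      simp only [ppS, mem_filter, mem_product, mem_range, and_true, true_and, ne_eq] at hx hy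
      simp only [Prod.mk.injEq] at h ⊢
      omega
    · rintro ⟨v, u, d⟩ hv
      simp only [ppR, mem_filter, mem_product, mem_range, and_true, true_and, ne_eq] at hv
      refine ⟨(k - (3*d + 2*u + v), d + u + v, d + u, d), ?_, ?_⟩
      · simp only [ppS, mem_filter, mem_product, mem_range, and_true, true_and, ne_eq]
        omega
      · dsimp only; simp only [Prod.mk.injEq, and_true, true_and]; omega
  · -- b < c part ↔ ppR' k
    apply Finset.card_bij (fun x _ => (x.2.2.1 - x.2.1 - 1, x.2.1 - x.2.2.2, x.2.2.2))
    · rintro ⟨a, b, c, d⟩ hx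
      simp only [ppS, mem_filter, mem_product, mem_range, and_true, true_and, ne_eq, not_le] at hx
      simp only [ppR', mem_filter, mem_product, mem_range, and_true, true_and, ne_eq]
      omega
    · rintro ⟨a, b, c, d⟩ hx ⟨a', b', c', d'⟩ hy h
      simp only [ppS, mem_filter, mem_product, mem_range, and_true, true_and, ne_eq, not_le] at hx hy
      simp only [Prod.mk.injEq] at h ⊢
      omega
    · rintro ⟨v, u, d⟩ hv
      simp only [ppR', mem_filter, mem_product, mem_range, and_true, true_and, ne_eq] at hv
      refine ⟨(k - (3*d + 2*u + v + 1), d + u, d + u + v + 1, d), ?_, ?_⟩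
      · simp only [ppS, mem_filter, mem_product, mem_range, and_true, true_and, ne_eq, not_le]
        omega
      · dsimp only; simp only [Prod.mk.injEq, and_true, true_and]; omega

lemma ppR'_eq (k : ℕ) : (ppR' (k+2)).card = ppP3 k := by
  rw [ppP3]
  apply Finset.card_bij (fun x _ => x)
  · rintro ⟨v, u, d⟩ hx
    simp only [ppR', mem_filter, mem_product, mem_range, and_true, true_and, ne_eq] at hx
    simp only [ppR, mem_filter, mem_product, mem_range, and_true, true_and, ne_eq]
    omega
  · rintro x _ y _ h; exact h
  · rintro ⟨v, u, d⟩ hv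
    simp only [ppR, mem_filter, mem_product, mem_range, and_true, true_and, ne_eq] at hv
    refine ⟨(v, u, d), ?_, rfl⟩
    simp only [ppR', mem_filter, mem_product, mem_range, and_true, true_and, ne_eq]
    omega

def ppQ (m : ℕ) : Finset (ℕ × ℕ) :=
  ((range (m+1)) ×ˢ (range (m+1))).filter (fun x => 2*x.1 + 3*x.2 ≤ m)

def ppP2 (m : ℕ) : ℕ := (ppQ m).card

lemma ppP2_rec (m : ℕ) : ppP2 (m+3) = ppP2 m + ((m+3)/2 + 1) := by
  classical
  rw [ppP2, ppP2, ← Finset.card_filter_add_card_filter_not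
    (s := ppQ (m+3)) (p := fun x => x.2 = 0)]
  conv_rhs => rw [Nat.add_comm]
  congr 1
  · -- u = 0 part: card = (m+3)/2 + 1
    rw [← Finset.card_range ((m+3)/2 + 1)]
    apply Finset.card_bij (fun x _ => x.1)
    · rintro ⟨v, u⟩ hx
      simp only [ppQ, mem_filter, mem_product, mem_range, and_true, true_and, ne_eq] at hx ⊢
      omega
    · rintro ⟨v, u⟩ hx ⟨v', u'⟩ hy h
      simp only [ppQ, mem_filter, mem_product, mem_range, and_true, true_and, ne_eq] at hx hy
      simp only [Prod.mk.injEq]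
      dsimp only at h
      omega
    · intro v hv
      simp only [mem_range] at hv
      refine ⟨(v, 0), ?_, rfl⟩
      simp only [ppQ, mem_filter, mem_product, mem_range, and_true, true_and, ne_eq]
      omega
  · -- u ≥ 1 part ≃ ppQ m
    apply Finset.card_bij (fun x _ => (x.1, x.2 - 1))
    · rintro ⟨v, u⟩ hx
      simp only [ppQ, mem_filter, mem_product, mem_range, and_true, true_and, ne_eq] at hx ⊢
      omega
    · rintro ⟨v, u⟩ hx ⟨v', u'⟩ hy h
      simp only [ppQ, mem_filter, mem_product, mem_range, and_true, true_and, ne_eq] at hx hy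
      simp only [Prod.mk.injEq] at h ⊢
      omega
    · rintro ⟨v, u⟩ hv
      simp only [ppQ, mem_filter, mem_product, mem_range, and_true, true_and, ne_eq] at hv
      refine ⟨(v, u + 1), ?_, ?_⟩
      · simp only [ppQ, mem_filter, mem_product, mem_range, and_true, true_and, ne_eq]
        exact ⟨⟨by omega, by omega⟩, by omega⟩
      · dsimp only; simp only [Prod.mk.injEq, and_true, true_and]; omega

lemma ppP3_rec (n : ℕ) : ppP3 (n+4) = ppP3 n + ppP2 (n+4) := by
  classical
  rw [ppP3, ppP3, ppP2, ← Finset.card_filter_add_card_filter_not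
    (s := ppR (n+4)) (p := fun x => x.2.2 = 0)]
  rw [Nat.add_comm ((ppR n).card)]
  congr 1
  · -- d = 0 part ≃ ppQ (n+4)
    apply Finset.card_bij (fun x _ => (x.1, x.2.1))
    · rintro ⟨v, u, d⟩ hx
      simp only [ppR, mem_filter, mem_product, mem_range, and_true, true_and, ne_eq] at hx
      simp only [ppQ, mem_filter, mem_product, mem_range, and_true, true_and, ne_eq]
      omega
    · rintro ⟨v, u, d⟩ hx ⟨v', u', d'⟩ hy h
      simp only [ppR, mem_filter, mem_product, mem_range, and_true, true_and, ne_eq] at hx hy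
      simp only [Prod.mk.injEq] at h ⊢
      omega
    · rintro ⟨v, u⟩ hv
      simp only [ppQ, mem_filter, mem_product, mem_range, and_true, true_and, ne_eq] at hv
      refine ⟨(v, u, 0), ?_, rfl⟩
      simp only [ppR, mem_filter, mem_product, mem_range, and_true, true_and, ne_eq]
      omega
  · -- d ≥ 1 part ≃ ppR n
    apply Finset.card_bij (fun x _ => (x.1, x.2.1, x.2.2 - 1))
    · rintro ⟨v, u, d⟩ hx
      simp only [ppR, mem_filter, mem_product, mem_range, and_true, true_and, ne_eq] at hx ⊢
      omega
    · rintro ⟨v, u, d⟩ hx ⟨v', u', d'⟩ hy h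
      simp only [ppR, mem_filter, mem_product, mem_range, and_true, true_and, ne_eq] at hx hy
      simp only [Prod.mk.injEq] at h ⊢
      omega
    · rintro ⟨v, u, d⟩ hv
      simp only [ppR, mem_filter, mem_product, mem_range, and_true, true_and, ne_eq] at hv
      refine ⟨(v, u, d + 1), ?_, ?_⟩
      · simp only [ppR, mem_filter, mem_product, mem_range, and_true, true_and, ne_eq]
        omega
      · dsimp only; simp only [Prod.mk.injEq, and_true, true_and]; omega


def ppB2 : ℕ → ℚ
  | 0 => 12 | 1 => 5 | 2 => 8 | 3 => 9 | 4 => 8 | _ => 5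

lemma ppP2_zero : ppP2 0 = 1 := by decide
lemma ppP2_one : ppP2 1 = 1 := by decide
lemma ppP2_two : ppP2 2 = 2 := by decide
lemma ppP2_three : ppP2 3 = 3 := by decide
lemma ppP2_four : ppP2 4 = 4 := by decide
lemma ppP2_five : ppP2 5 = 5 := by decide

lemma ppP2_closed : ∀ q r, r < 6 →
    (ppP2 (6*q + r) : ℚ) = ((6*q+r : ℕ) : ℚ)^2/12 + ((6*q+r : ℕ) : ℚ)/2 + ppB2 r / 12 := by
  intro q
  induction q with
  | zero =>
    intro r hr
    interval_cases r <;>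
      simp [ppP2_zero, ppP2_one, ppP2_two, ppP2_three, ppP2_four, ppP2_five, ppB2] <;>
      norm_num
  | succ q ih =>
    intro r hr
    have h1 := ppP2_rec (6*q + r)
    have h2 := ppP2_rec (6*q + r + 3)
    have e1 : 6*(q+1) + r = 6*q + r + 3 + 3 := by ring
    rw [e1, h2, h1]
    have hq := ih r hr
    interval_cases r <;>
    [ (have d1 : (6*q + 0 + 3)/2 = 3*q + 1 := by omega
       have d2 : (6*q + 0 + 3 + 3)/2 = 3*q + 3 := by omega
       rw [d1, d2]);
      (have d1 : (6*q + 1 + 3)/2 = 3*q + 2 := by omega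
       have d2 : (6*q + 1 + 3 + 3)/2 = 3*q + 3 := by omega
       rw [d1, d2]);
      (have d1 : (6*q + 2 + 3)/2 = 3*q + 2 := by omega
       have d2 : (6*q + 2 + 3 + 3)/2 = 3*q + 4 := by omega
       rw [d1, d2]);
      (have d1 : (6*q + 3 + 3)/2 = 3*q + 3 := by omega
       have d2 : (6*q + 3 + 3 + 3)/2 = 3*q + 4 := by omega
       rw [d1, d2]);
      (have d1 : (6*q + 4 + 3)/2 = 3*q + 3 := by omega
       have d2 : (6*q + 4 + 3 + 3)/2 = 3*q + 5 := by omega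
       rw [d1, d2]);
      (have d1 : (6*q + 5 + 3)/2 = 3*q + 4 := by omega
       have d2 : (6*q + 5 + 3 + 3)/2 = 3*q + 5 := by omega
       rw [d1, d2]) ] <;>
    · push_cast at hq ⊢
      rw [hq]
      simp only [ppB2]
      ring

def ppB : ℕ → ℚ
  | 0 => 72 | 1 => 63 | 2 => 72 | 3 => 63 | 4 => 72 | 5 => 63
  | 6 => 72 | 7 => 63 | 8 => 72 | 9 => 63 | 10 => 72 | _ => 63

def ppC : ℕ → ℚ
  | 0 => 144 | 1 => 65 | 2 => 76 | 3 => 81 | 4 => 128 | 5 => 49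
  | 6 => 108 | 7 => 65 | 8 => 112 | 9 => 81 | 10 => 92 | _ => 49

set_option maxRecDepth 100000 in
lemma ppP3_0 : ppP3 0 = 1 := by decide
set_option maxRecDepth 100000 in
lemma ppP3_1 : ppP3 1 = 1 := by decide
set_option maxRecDepth 100000 in
lemma ppP3_2 : ppP3 2 = 2 := by decide
set_option maxRecDepth 100000 in
lemma ppP3_3 : ppP3 3 = 3 := by decide
set_option maxRecDepth 100000 in
lemma ppP3_4 : ppP3 4 = 5 := by decide
set_option maxRecDepth 100000 in
lemma ppP3_5 : ppP3 5 = 6 := by decide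
set_option maxRecDepth 100000 in
lemma ppP3_6 : ppP3 6 = 9 := by decide
set_option maxRecDepth 100000 in
lemma ppP3_7 : ppP3 7 = 11 := by decide
set_option maxRecDepth 100000 in
lemma ppP3_8 : ppP3 8 = 15 := by decide
set_option maxRecDepth 100000 in
lemma ppP3_9 : ppP3 9 = 18 := by decide
set_option maxRecDepth 100000 in
lemma ppP3_10 : ppP3 10 = 23 := by decide
set_option maxRecDepth 100000 in
lemma ppP3_11 : ppP3 11 = 27 := by decide

lemma ppP3_closed : ∀ q r, r < 12 →
    (ppP3 (12*q + r) : ℚ) = ((12*q+r : ℕ) : ℚ)^3/144 + 5*((12*q+r : ℕ) : ℚ)^2/48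
      + ppB r * ((12*q+r : ℕ) : ℚ)/144 + ppC r / 144 := by
  intro q
  induction q with
  | zero =>
    intro r hr
    interval_cases r <;>
      simp [ppP3_0, ppP3_1, ppP3_2, ppP3_3, ppP3_4, ppP3_5, ppP3_6, ppP3_7, ppP3_8,
        ppP3_9, ppP3_10, ppP3_11, ppB, ppC] <;> norm_num
  | succ q ih =>
    intro r hr
    have h1 := ppP3_rec (12*q + r)
    have h2 := ppP3_rec (12*q + r + 4)
    have h3 := ppP3_rec (12*q + r + 4 + 4)
    have e1 : 12*(q+1) + r = 12*q + r + 4 + 4 + 4 := by ring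
    rw [e1, h3, h2, h1]
    have hq := ih r hr
    interval_cases r
    · -- r = 0
      have hA : ((ppP2 (12*q + 0 + 4) : ℕ) : ℚ) = ((6*(2*q + 0) + 4 : ℕ) : ℚ)^2/12 + ((6*(2*q + 0) + 4 : ℕ) : ℚ)/2 + ppB2 4 / 12 := by
        rw [show 12*q + 0 + 4 = 6*(2*q + 0) + 4 from by ring]
        exact ppP2_closed (2*q + 0) 4 (by norm_num)
      have hB : ((ppP2 (12*q + 0 + 4 + 4) : ℕ) : ℚ) = ((6*(2*q + 1) + 2 : ℕ) : ℚ)^2/12 + ((6*(2*q + 1) + 2 : ℕ) : ℚ)/2 + ppB2 2 / 12 := by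
        rw [show 12*q + 0 + 4 + 4 = 6*(2*q + 1) + 2 from by ring]
        exact ppP2_closed (2*q + 1) 2 (by norm_num)
      have hC : ((ppP2 (12*q + 0 + 4 + 4 + 4) : ℕ) : ℚ) = ((6*(2*q + 2) + 0 : ℕ) : ℚ)^2/12 + ((6*(2*q + 2) + 0 : ℕ) : ℚ)/2 + ppB2 0 / 12 := by
        rw [show 12*q + 0 + 4 + 4 + 4 = 6*(2*q + 2) + 0 from by ring]
        exact ppP2_closed (2*q + 2) 0 (by norm_num)
      push_cast at hq hA hB hC ⊢
      rw [hq, hA, hB, hC]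
      simp only [ppB, ppC, ppB2]
      push_cast
      ring
    · -- r = 1
      have hA : ((ppP2 (12*q + 1 + 4) : ℕ) : ℚ) = ((6*(2*q + 0) + 5 : ℕ) : ℚ)^2/12 + ((6*(2*q + 0) + 5 : ℕ) : ℚ)/2 + ppB2 5 / 12 := by
        rw [show 12*q + 1 + 4 = 6*(2*q + 0) + 5 from by ring]
        exact ppP2_closed (2*q + 0) 5 (by norm_num)
      have hB : ((ppP2 (12*q + 1 + 4 + 4) : ℕ) : ℚ) = ((6*(2*q + 1) + 3 : ℕ) : ℚ)^2/12 + ((6*(2*q + 1) + 3 : ℕ) : ℚ)/2 + ppB2 3 / 12 := by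
        rw [show 12*q + 1 + 4 + 4 = 6*(2*q + 1) + 3 from by ring]
        exact ppP2_closed (2*q + 1) 3 (by norm_num)
      have hC : ((ppP2 (12*q + 1 + 4 + 4 + 4) : ℕ) : ℚ) = ((6*(2*q + 2) + 1 : ℕ) : ℚ)^2/12 + ((6*(2*q + 2) + 1 : ℕ) : ℚ)/2 + ppB2 1 / 12 := by
        rw [show 12*q + 1 + 4 + 4 + 4 = 6*(2*q + 2) + 1 from by ring]
        exact ppP2_closed (2*q + 2) 1 (by norm_num)
      push_cast at hq hA hB hC ⊢
      rw [hq, hA, hB, hC]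
      simp only [ppB, ppC, ppB2]
      push_cast
      ring
    · -- r = 2
      have hA : ((ppP2 (12*q + 2 + 4) : ℕ) : ℚ) = ((6*(2*q + 1) + 0 : ℕ) : ℚ)^2/12 + ((6*(2*q + 1) + 0 : ℕ) : ℚ)/2 + ppB2 0 / 12 := by
        rw [show 12*q + 2 + 4 = 6*(2*q + 1) + 0 from by ring]
        exact ppP2_closed (2*q + 1) 0 (by norm_num)
      have hB : ((ppP2 (12*q + 2 + 4 + 4) : ℕ) : ℚ) = ((6*(2*q + 1) + 4 : ℕ) : ℚ)^2/12 + ((6*(2*q + 1) + 4 : ℕ) : ℚ)/2 + ppB2 4 / 12 := by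
        rw [show 12*q + 2 + 4 + 4 = 6*(2*q + 1) + 4 from by ring]
        exact ppP2_closed (2*q + 1) 4 (by norm_num)
      have hC : ((ppP2 (12*q + 2 + 4 + 4 + 4) : ℕ) : ℚ) = ((6*(2*q + 2) + 2 : ℕ) : ℚ)^2/12 + ((6*(2*q + 2) + 2 : ℕ) : ℚ)/2 + ppB2 2 / 12 := by
        rw [show 12*q + 2 + 4 + 4 + 4 = 6*(2*q + 2) + 2 from by ring]
        exact ppP2_closed (2*q + 2) 2 (by norm_num)
      push_cast at hq hA hB hC ⊢
      rw [hq, hA, hB, hC]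
      simp only [ppB, ppC, ppB2]
      push_cast
      ring
    · -- r = 3
      have hA : ((ppP2 (12*q + 3 + 4) : ℕ) : ℚ) = ((6*(2*q + 1) + 1 : ℕ) : ℚ)^2/12 + ((6*(2*q + 1) + 1 : ℕ) : ℚ)/2 + ppB2 1 / 12 := by
        rw [show 12*q + 3 + 4 = 6*(2*q + 1) + 1 from by ring]
        exact ppP2_closed (2*q + 1) 1 (by norm_num)
      have hB : ((ppP2 (12*q + 3 + 4 + 4) : ℕ) : ℚ) = ((6*(2*q + 1) + 5 : ℕ) : ℚ)^2/12 + ((6*(2*q + 1) + 5 : ℕ) : ℚ)/2 + ppB2 5 / 12 := by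
        rw [show 12*q + 3 + 4 + 4 = 6*(2*q + 1) + 5 from by ring]
        exact ppP2_closed (2*q + 1) 5 (by norm_num)
      have hC : ((ppP2 (12*q + 3 + 4 + 4 + 4) : ℕ) : ℚ) = ((6*(2*q + 2) + 3 : ℕ) : ℚ)^2/12 + ((6*(2*q + 2) + 3 : ℕ) : ℚ)/2 + ppB2 3 / 12 := by
        rw [show 12*q + 3 + 4 + 4 + 4 = 6*(2*q + 2) + 3 from by ring]
        exact ppP2_closed (2*q + 2) 3 (by norm_num)
      push_cast at hq hA hB hC ⊢
      rw [hq, hA, hB, hC]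
      simp only [ppB, ppC, ppB2]
      push_cast
      ring
    · -- r = 4
      have hA : ((ppP2 (12*q + 4 + 4) : ℕ) : ℚ) = ((6*(2*q + 1) + 2 : ℕ) : ℚ)^2/12 + ((6*(2*q + 1) + 2 : ℕ) : ℚ)/2 + ppB2 2 / 12 := by
        rw [show 12*q + 4 + 4 = 6*(2*q + 1) + 2 from by ring]
        exact ppP2_closed (2*q + 1) 2 (by norm_num)
      have hB : ((ppP2 (12*q + 4 + 4 + 4) : ℕ) : ℚ) = ((6*(2*q + 2) + 0 : ℕ) : ℚ)^2/12 + ((6*(2*q + 2) + 0 : ℕ) : ℚ)/2 + ppB2 0 / 12 := by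
        rw [show 12*q + 4 + 4 + 4 = 6*(2*q + 2) + 0 from by ring]
        exact ppP2_closed (2*q + 2) 0 (by norm_num)
      have hC : ((ppP2 (12*q + 4 + 4 + 4 + 4) : ℕ) : ℚ) = ((6*(2*q + 2) + 4 : ℕ) : ℚ)^2/12 + ((6*(2*q + 2) + 4 : ℕ) : ℚ)/2 + ppB2 4 / 12 := by
        rw [show 12*q + 4 + 4 + 4 + 4 = 6*(2*q + 2) + 4 from by ring]
        exact ppP2_closed (2*q + 2) 4 (by norm_num)
      push_cast at hq hA hB hC ⊢
      rw [hq, hA, hB, hC]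
      simp only [ppB, ppC, ppB2]
      push_cast
      ring
    · -- r = 5
      have hA : ((ppP2 (12*q + 5 + 4) : ℕ) : ℚ) = ((6*(2*q + 1) + 3 : ℕ) : ℚ)^2/12 + ((6*(2*q + 1) + 3 : ℕ) : ℚ)/2 + ppB2 3 / 12 := by
        rw [show 12*q + 5 + 4 = 6*(2*q + 1) + 3 from by ring]
        exact ppP2_closed (2*q + 1) 3 (by norm_num)
      have hB : ((ppP2 (12*q + 5 + 4 + 4) : ℕ) : ℚ) = ((6*(2*q + 2) + 1 : ℕ) : ℚ)^2/12 + ((6*(2*q + 2) + 1 : ℕ) : ℚ)/2 + ppB2 1 / 12 := by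
        rw [show 12*q + 5 + 4 + 4 = 6*(2*q + 2) + 1 from by ring]
        exact ppP2_closed (2*q + 2) 1 (by norm_num)
      have hC : ((ppP2 (12*q + 5 + 4 + 4 + 4) : ℕ) : ℚ) = ((6*(2*q + 2) + 5 : ℕ) : ℚ)^2/12 + ((6*(2*q + 2) + 5 : ℕ) : ℚ)/2 + ppB2 5 / 12 := by
        rw [show 12*q + 5 + 4 + 4 + 4 = 6*(2*q + 2) + 5 from by ring]
        exact ppP2_closed (2*q + 2) 5 (by norm_num)
      push_cast at hq hA hB hC ⊢
      rw [hq, hA, hB, hC]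
      simp only [ppB, ppC, ppB2]
      push_cast
      ring
    · -- r = 6
      have hA : ((ppP2 (12*q + 6 + 4) : ℕ) : ℚ) = ((6*(2*q + 1) + 4 : ℕ) : ℚ)^2/12 + ((6*(2*q + 1) + 4 : ℕ) : ℚ)/2 + ppB2 4 / 12 := by
        rw [show 12*q + 6 + 4 = 6*(2*q + 1) + 4 from by ring]
        exact ppP2_closed (2*q + 1) 4 (by norm_num)
      have hB : ((ppP2 (12*q + 6 + 4 + 4) : ℕ) : ℚ) = ((6*(2*q + 2) + 2 : ℕ) : ℚ)^2/12 + ((6*(2*q + 2) + 2 : ℕ) : ℚ)/2 + ppB2 2 / 12 := by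
        rw [show 12*q + 6 + 4 + 4 = 6*(2*q + 2) + 2 from by ring]
        exact ppP2_closed (2*q + 2) 2 (by norm_num)
      have hC : ((ppP2 (12*q + 6 + 4 + 4 + 4) : ℕ) : ℚ) = ((6*(2*q + 3) + 0 : ℕ) : ℚ)^2/12 + ((6*(2*q + 3) + 0 : ℕ) : ℚ)/2 + ppB2 0 / 12 := by
        rw [show 12*q + 6 + 4 + 4 + 4 = 6*(2*q + 3) + 0 from by ring]
        exact ppP2_closed (2*q + 3) 0 (by norm_num)
      push_cast at hq hA hB hC ⊢
      rw [hq, hA, hB, hC]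
      simp only [ppB, ppC, ppB2]
      push_cast
      ring
    · -- r = 7
      have hA : ((ppP2 (12*q + 7 + 4) : ℕ) : ℚ) = ((6*(2*q + 1) + 5 : ℕ) : ℚ)^2/12 + ((6*(2*q + 1) + 5 : ℕ) : ℚ)/2 + ppB2 5 / 12 := by
        rw [show 12*q + 7 + 4 = 6*(2*q + 1) + 5 from by ring]
        exact ppP2_closed (2*q + 1) 5 (by norm_num)
      have hB : ((ppP2 (12*q + 7 + 4 + 4) : ℕ) : ℚ) = ((6*(2*q + 2) + 3 : ℕ) : ℚ)^2/12 + ((6*(2*q + 2) + 3 : ℕ) : ℚ)/2 + ppB2 3 / 12 := by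
        rw [show 12*q + 7 + 4 + 4 = 6*(2*q + 2) + 3 from by ring]
        exact ppP2_closed (2*q + 2) 3 (by norm_num)
      have hC : ((ppP2 (12*q + 7 + 4 + 4 + 4) : ℕ) : ℚ) = ((6*(2*q + 3) + 1 : ℕ) : ℚ)^2/12 + ((6*(2*q + 3) + 1 : ℕ) : ℚ)/2 + ppB2 1 / 12 := by
        rw [show 12*q + 7 + 4 + 4 + 4 = 6*(2*q + 3) + 1 from by ring]
        exact ppP2_closed (2*q + 3) 1 (by norm_num)
      push_cast at hq hA hB hC ⊢
      rw [hq, hA, hB, hC]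
      simp only [ppB, ppC, ppB2]
      push_cast
      ring
    · -- r = 8
      have hA : ((ppP2 (12*q + 8 + 4) : ℕ) : ℚ) = ((6*(2*q + 2) + 0 : ℕ) : ℚ)^2/12 + ((6*(2*q + 2) + 0 : ℕ) : ℚ)/2 + ppB2 0 / 12 := by
        rw [show 12*q + 8 + 4 = 6*(2*q + 2) + 0 from by ring]
        exact ppP2_closed (2*q + 2) 0 (by norm_num)
      have hB : ((ppP2 (12*q + 8 + 4 + 4) : ℕ) : ℚ) = ((6*(2*q + 2) + 4 : ℕ) : ℚ)^2/12 + ((6*(2*q + 2) + 4 : ℕ) : ℚ)/2 + ppB2 4 / 12 := by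
        rw [show 12*q + 8 + 4 + 4 = 6*(2*q + 2) + 4 from by ring]
        exact ppP2_closed (2*q + 2) 4 (by norm_num)
      have hC : ((ppP2 (12*q + 8 + 4 + 4 + 4) : ℕ) : ℚ) = ((6*(2*q + 3) + 2 : ℕ) : ℚ)^2/12 + ((6*(2*q + 3) + 2 : ℕ) : ℚ)/2 + ppB2 2 / 12 := by
        rw [show 12*q + 8 + 4 + 4 + 4 = 6*(2*q + 3) + 2 from by ring]
        exact ppP2_closed (2*q + 3) 2 (by norm_num)
      push_cast at hq hA hB hC ⊢
      rw [hq, hA, hB, hC]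
      simp only [ppB, ppC, ppB2]
      push_cast
      ring
    · -- r = 9
      have hA : ((ppP2 (12*q + 9 + 4) : ℕ) : ℚ) = ((6*(2*q + 2) + 1 : ℕ) : ℚ)^2/12 + ((6*(2*q + 2) + 1 : ℕ) : ℚ)/2 + ppB2 1 / 12 := by
        rw [show 12*q + 9 + 4 = 6*(2*q + 2) + 1 from by ring]
        exact ppP2_closed (2*q + 2) 1 (by norm_num)
      have hB : ((ppP2 (12*q + 9 + 4 + 4) : ℕ) : ℚ) = ((6*(2*q + 2) + 5 : ℕ) : ℚ)^2/12 + ((6*(2*q + 2) + 5 : ℕ) : ℚ)/2 + ppB2 5 / 12 := by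
        rw [show 12*q + 9 + 4 + 4 = 6*(2*q + 2) + 5 from by ring]
        exact ppP2_closed (2*q + 2) 5 (by norm_num)
      have hC : ((ppP2 (12*q + 9 + 4 + 4 + 4) : ℕ) : ℚ) = ((6*(2*q + 3) + 3 : ℕ) : ℚ)^2/12 + ((6*(2*q + 3) + 3 : ℕ) : ℚ)/2 + ppB2 3 / 12 := by
        rw [show 12*q + 9 + 4 + 4 + 4 = 6*(2*q + 3) + 3 from by ring]
        exact ppP2_closed (2*q + 3) 3 (by norm_num)
      push_cast at hq hA hB hC ⊢
      rw [hq, hA, hB, hC]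
      simp only [ppB, ppC, ppB2]
      push_cast
      ring
    · -- r = 10
      have hA : ((ppP2 (12*q + 10 + 4) : ℕ) : ℚ) = ((6*(2*q + 2) + 2 : ℕ) : ℚ)^2/12 + ((6*(2*q + 2) + 2 : ℕ) : ℚ)/2 + ppB2 2 / 12 := by
        rw [show 12*q + 10 + 4 = 6*(2*q + 2) + 2 from by ring]
        exact ppP2_closed (2*q + 2) 2 (by norm_num)
      have hB : ((ppP2 (12*q + 10 + 4 + 4) : ℕ) : ℚ) = ((6*(2*q + 3) + 0 : ℕ) : ℚ)^2/12 + ((6*(2*q + 3) + 0 : ℕ) : ℚ)/2 + ppB2 0 / 12 := by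
        rw [show 12*q + 10 + 4 + 4 = 6*(2*q + 3) + 0 from by ring]
        exact ppP2_closed (2*q + 3) 0 (by norm_num)
      have hC : ((ppP2 (12*q + 10 + 4 + 4 + 4) : ℕ) : ℚ) = ((6*(2*q + 3) + 4 : ℕ) : ℚ)^2/12 + ((6*(2*q + 3) + 4 : ℕ) : ℚ)/2 + ppB2 4 / 12 := by
        rw [show 12*q + 10 + 4 + 4 + 4 = 6*(2*q + 3) + 4 from by ring]
        exact ppP2_closed (2*q + 3) 4 (by norm_num)
      push_cast at hq hA hB hC ⊢
      rw [hq, hA, hB, hC]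
      simp only [ppB, ppC, ppB2]
      push_cast
      ring
    · -- r = 11
      have hA : ((ppP2 (12*q + 11 + 4) : ℕ) : ℚ) = ((6*(2*q + 2) + 3 : ℕ) : ℚ)^2/12 + ((6*(2*q + 2) + 3 : ℕ) : ℚ)/2 + ppB2 3 / 12 := by
        rw [show 12*q + 11 + 4 = 6*(2*q + 2) + 3 from by ring]
        exact ppP2_closed (2*q + 2) 3 (by norm_num)
      have hB : ((ppP2 (12*q + 11 + 4 + 4) : ℕ) : ℚ) = ((6*(2*q + 3) + 1 : ℕ) : ℚ)^2/12 + ((6*(2*q + 3) + 1 : ℕ) : ℚ)/2 + ppB2 1 / 12 := by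
        rw [show 12*q + 11 + 4 + 4 = 6*(2*q + 3) + 1 from by ring]
        exact ppP2_closed (2*q + 3) 1 (by norm_num)
      have hC : ((ppP2 (12*q + 11 + 4 + 4 + 4) : ℕ) : ℚ) = ((6*(2*q + 3) + 5 : ℕ) : ℚ)^2/12 + ((6*(2*q + 3) + 5 : ℕ) : ℚ)/2 + ppB2 5 / 12 := by
        rw [show 12*q + 11 + 4 + 4 + 4 = 6*(2*q + 3) + 5 from by ring]
        exact ppP2_closed (2*q + 3) 5 (by norm_num)
      push_cast at hq hA hB hC ⊢
      rw [hq, hA, hB, hC]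
      simp only [ppB, ppC, ppB2]
      push_cast
      ring

lemma pp_main (j : ℕ) :
    (planePartitionCount 2 (j + 2) : ℚ) = (ppP3 (j + 2) : ℚ) + (ppP3 j : ℚ) := by
  rw [pp_count_eq, ppS_card, ppR'_eq]
  push_cast
  ring

lemma pp_zero : planePartitionCount 2 0 = 1 := by
  rw [pp_count_eq]; decide

lemma pp_one : planePartitionCount 2 1 = 1 := by
  rw [pp_count_eq]; decide

theorem planePartitionCount_two_two_quasipolynomial (k : ℕ) :
    (k % 6 = 0 → (planePartitionCount 2 k : ℚ) =
      (k : ℚ) ^ 3 / 72 + (k : ℚ) ^ 2 / 6 + (2 / 3) * k + 1) ∧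
    (k % 6 = 1 → (planePartitionCount 2 k : ℚ) =
      (k : ℚ) ^ 3 / 72 + (k : ℚ) ^ 2 / 6 + (13 / 24) * k + 5 / 18) ∧
    (k % 6 = 2 → (planePartitionCount 2 k : ℚ) =
      (k : ℚ) ^ 3 / 72 + (k : ℚ) ^ 2 / 6 + (2 / 3) * k + 8 / 9) ∧
    (k % 6 = 3 → (planePartitionCount 2 k : ℚ) =
      (k : ℚ) ^ 3 / 72 + (k : ℚ) ^ 2 / 6 + (13 / 24) * k + 1 / 2) ∧
    (k % 6 = 4 → (planePartitionCount 2 k : ℚ) =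
      (k : ℚ) ^ 3 / 72 + (k : ℚ) ^ 2 / 6 + (2 / 3) * k + 7 / 9) ∧
    (k % 6 = 5 → (planePartitionCount 2 k : ℚ) =
      (k : ℚ) ^ 3 / 72 + (k : ℚ) ^ 2 / 6 + (13 / 24) * k + 7 / 18) := by
  by_cases hk2 : k < 2
  · interval_cases k
    · exact ⟨fun _ => by rw [pp_zero]; norm_num,
        fun h => absurd h (by omega), fun h => absurd h (by omega),
        fun h => absurd h (by omega), fun h => absurd h (by omega),
        fun h => absurd h (by omega)⟩
    · exact ⟨fun h => absurd h (by omega),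
        fun _ => by rw [pp_one]; norm_num,
        fun h => absurd h (by omega), fun h => absurd h (by omega),
        fun h => absurd h (by omega), fun h => absurd h (by omega)⟩
  · obtain ⟨q, r, hr, rfl⟩ : ∃ q r, r < 12 ∧ k = 12*q + r + 2 :=
      ⟨(k-2)/12, (k-2)%12, by omega, by omega⟩
    refine ⟨?_, ?_, ?_, ?_, ?_, ?_⟩ <;> intro h
    · interval_cases r
      · exact absurd h (by omega)
      · exact absurd h (by omega)
      · exact absurd h (by omega)
      · exact absurd h (by omega)
      · rw [pp_main (12*q + 4), ppP3_closed q 4 (by norm_num)]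
        rw [show 12*q + 4 + 2 = 12*q + 6 from by omega]
        rw [ppP3_closed q 6 (by norm_num)]
        simp only [ppB, ppC]
        push_cast
        ring
      · exact absurd h (by omega)
      · exact absurd h (by omega)
      · exact absurd h (by omega)
      · exact absurd h (by omega)
      · exact absurd h (by omega)
      · rw [pp_main (12*q + 10), ppP3_closed q 10 (by norm_num)]
        rw [show 12*q + 10 + 2 = 12*(q+1) + 0 from by ring]
        rw [ppP3_closed (q+1) 0 (by norm_num)]
        simp only [ppB, ppC]
        push_cast
        ring
      · exact absurd h (by omega)
    · interval_cases r
      · exact absurd h (by omega)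
      · exact absurd h (by omega)
      · exact absurd h (by omega)
      · exact absurd h (by omega)
      · exact absurd h (by omega)
      · rw [pp_main (12*q + 5), ppP3_closed q 5 (by norm_num)]
        rw [show 12*q + 5 + 2 = 12*q + 7 from by omega]
        rw [ppP3_closed q 7 (by norm_num)]
        simp only [ppB, ppC]
        push_cast
        ring
      · exact absurd h (by omega)
      · exact absurd h (by omega)
      · exact absurd h (by omega)
      · exact absurd h (by omega)
      · exact absurd h (by omega)
      · rw [pp_main (12*q + 11), ppP3_closed q 11 (by norm_num)]
        rw [show 12*q + 11 + 2 = 12*(q+1) + 1 from by ring]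
        rw [ppP3_closed (q+1) 1 (by norm_num)]
        simp only [ppB, ppC]
        push_cast
        ring
    · interval_cases r
      · rw [pp_main (12*q + 0), ppP3_closed q 0 (by norm_num)]
        rw [show 12*q + 0 + 2 = 12*q + 2 from by omega]
        rw [ppP3_closed q 2 (by norm_num)]
        simp only [ppB, ppC]
        push_cast
        ring
      · exact absurd h (by omega)
      · exact absurd h (by omega)
      · exact absurd h (by omega)
      · exact absurd h (by omega)
      · exact absurd h (by omega)
      · rw [pp_main (12*q + 6), ppP3_closed q 6 (by norm_num)]
        rw [show 12*q + 6 + 2 = 12*q + 8 from by omega]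
        rw [ppP3_closed q 8 (by norm_num)]
        simp only [ppB, ppC]
        push_cast
        ring
      · exact absurd h (by omega)
      · exact absurd h (by omega)
      · exact absurd h (by omega)
      · exact absurd h (by omega)
      · exact absurd h (by omega)
    · interval_cases r
      · exact absurd h (by omega)
      · rw [pp_main (12*q + 1), ppP3_closed q 1 (by norm_num)]
        rw [show 12*q + 1 + 2 = 12*q + 3 from by omega]
        rw [ppP3_closed q 3 (by norm_num)]
        simp only [ppB, ppC]
        push_cast
        ring
      · exact absurd h (by omega)
      · exact absurd h (by omega)
      · exact absurd h (by omega)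
      · exact absurd h (by omega)
      · exact absurd h (by omega)
      · rw [pp_main (12*q + 7), ppP3_closed q 7 (by norm_num)]
        rw [show 12*q + 7 + 2 = 12*q + 9 from by omega]
        rw [ppP3_closed q 9 (by norm_num)]
        simp only [ppB, ppC]
        push_cast
        ring
      · exact absurd h (by omega)
      · exact absurd h (by omega)
      · exact absurd h (by omega)
      · exact absurd h (by omega)
    · interval_cases r
      · exact absurd h (by omega)
      · exact absurd h (by omega)
      · rw [pp_main (12*q + 2), ppP3_closed q 2 (by norm_num)]
        rw [show 12*q + 2 + 2 = 12*q + 4 from by omega]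
        rw [ppP3_closed q 4 (by norm_num)]
        simp only [ppB, ppC]
        push_cast
        ring
      · exact absurd h (by omega)
      · exact absurd h (by omega)
      · exact absurd h (by omega)
      · exact absurd h (by omega)
      · exact absurd h (by omega)
      · rw [pp_main (12*q + 8), ppP3_closed q 8 (by norm_num)]
        rw [show 12*q + 8 + 2 = 12*q + 10 from by omega]
        rw [ppP3_closed q 10 (by norm_num)]
        simp only [ppB, ppC]
        push_cast
        ring
      · exact absurd h (by omega)
      · exact absurd h (by omega)
      · exact absurd h (by omega)
    · interval_cases r
      · exact absurd h (by omega)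
      · exact absurd h (by omega)
      · exact absurd h (by omega)
      · rw [pp_main (12*q + 3), ppP3_closed q 3 (by norm_num)]
        rw [show 12*q + 3 + 2 = 12*q + 5 from by omega]
        rw [ppP3_closed q 5 (by norm_num)]
        simp only [ppB, ppC]
        push_cast
        ring
      · exact absurd h (by omega)
      · exact absurd h (by omega)
      · exact absurd h (by omega)
      · exact absurd h (by omega)
      · exact absurd h (by omega)
      · rw [pp_main (12*q + 9), ppP3_closed q 9 (by norm_num)]
        rw [show 12*q + 9 + 2 = 12*q + 11 from by omega]
        rw [ppP3_closed q 11 (by norm_num)]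
        simp only [ppB, ppC]
        push_cast
        ring
      · exact absurd h (by omega)
      · exact absurd h (by omega)
end

section
/- The number of quadruples (a,b,c,d) of nonnegative integers with a ≥ b ≥ d, a ≥ c ≥ d and a+b+c+d = k equals the number of coloured partitions of k with parts in {1, 2, 2̄, 3}: i.e., the number of solutions in nonnegative integers of m₁ + 2m₂ + 2m₂' + 3m₃ = k. -/
/-!
Write a plane partition in a 2 × 2 box as `[[a, b], [c, d]]`. If `b + c ≤ a + d`, remove `b - d`
copies of `[[1, 1], [0, 0]]` and `c - d` copies of `[[1, 0], [1, 0]]`, leaving `[[a + 2d - b - c, d], [d, d]]`;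
otherwise remove `a - c` and `a - b` copies, leaving `[[e, e], [e, d]]` with `e = b + c - a > d`.
The two kinds of remainder are exactly the `[[max m₁ m₃, m₃], [m₃, min m₁ m₃]]`, of weight `m₁ + 3 m₃`,
with `m₁ ≥ m₃` and with `m₁ < m₃` respectively; the two removed multiplicities are the parts `2` and `2̄`.
-/

namespace BoxTwoTwo

/-- `q = (a, b, c, d)` stands for the array `[[a, b], [c, d]]`. -/
def IsPlanePartition (q : ℕ × ℕ × ℕ × ℕ) : Prop :=
  q.2.1 ≤ q.1 ∧ q.2.2.1 ≤ q.1 ∧ q.2.2.2 ≤ q.2.1 ∧ q.2.2.2 ≤ q.2.2.1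

def weight (q : ℕ × ℕ × ℕ × ℕ) : ℕ := q.1 + q.2.1 + q.2.2.1 + q.2.2.2

def colouredWeight (m : ℕ × ℕ × ℕ × ℕ) : ℕ := m.1 + 2 * m.2.1 + 2 * m.2.2.1 + 3 * m.2.2.2

def ofColoured : ℕ × ℕ × ℕ × ℕ → ℕ × ℕ × ℕ × ℕ
  | (m₁, m₂, m₂', m₃) => (m₂ + m₂' + max m₁ m₃, m₂ + m₃, m₂' + m₃, min m₁ m₃)

def toColoured : ℕ × ℕ × ℕ × ℕ → ℕ × ℕ × ℕ × ℕ
  | (a, b, c, d) =>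
    if b + c ≤ a + d then (a + 2 * d - (b + c), b - d, c - d, d) else (d, a - c, a - b, b + c - a)

theorem isPlanePartition_ofColoured (m : ℕ × ℕ × ℕ × ℕ) : IsPlanePartition (ofColoured m) := by
  obtain ⟨m₁, m₂, m₂', m₃⟩ := m
  simp only [IsPlanePartition, ofColoured]
  omega

theorem weight_ofColoured (m : ℕ × ℕ × ℕ × ℕ) : weight (ofColoured m) = colouredWeight m := by
  obtain ⟨m₁, m₂, m₂', m₃⟩ := m
  simp only [weight, ofColoured, colouredWeight]
  omega

theorem toColoured_ofColoured (m : ℕ × ℕ × ℕ × ℕ) : toColoured (ofColoured m) = m := by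
  obtain ⟨m₁, m₂, m₂', m₃⟩ := m
  rw [ofColoured, toColoured]
  split_ifs <;> simp only [Prod.mk.injEq] <;> omega

theorem ofColoured_toColoured {q : ℕ × ℕ × ℕ × ℕ} (hq : IsPlanePartition q) :
    ofColoured (toColoured q) = q := by
  obtain ⟨a, b, c, d⟩ := q
  simp only [IsPlanePartition] at hq
  rw [toColoured]
  split_ifs <;> simp only [ofColoured, Prod.mk.injEq] <;> omega

def colouredEquiv : ℕ × ℕ × ℕ × ℕ ≃ {q // IsPlanePartition q} where
  toFun m := ⟨ofColoured m, isPlanePartition_ofColoured m⟩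
  invFun q := toColoured q
  left_inv := toColoured_ofColoured
  right_inv q := Subtype.ext (ofColoured_toColoured q.2)

end BoxTwoTwo

open BoxTwoTwo in
theorem planePartition_box_two_two_eq_colouredCount (k : ℕ) :
    Nat.card {q : ℕ × ℕ × ℕ × ℕ //
        q.2.1 ≤ q.1 ∧ q.2.2.1 ≤ q.1 ∧ q.2.2.2 ≤ q.2.1 ∧ q.2.2.2 ≤ q.2.2.1 ∧
        q.1 + q.2.1 + q.2.2.1 + q.2.2.2 = k} =
      Nat.card {m : ℕ × ℕ × ℕ × ℕ //
        m.1 + 2 * m.2.1 + 2 * m.2.2.1 + 3 * m.2.2.2 = k} := by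
  have preservesWeight (m : ℕ × ℕ × ℕ × ℕ) :
      colouredWeight m = k ↔ weight (colouredEquiv m).1 = k := by
    rw [colouredEquiv, Equiv.coe_fn_mk, weight_ofColoured]
  symm
  refine Nat.card_congr <| (colouredEquiv.subtypeEquiv preservesWeight).trans <|
    (Equiv.subtypeSubtypeEquivSubtypeInter IsPlanePartition (weight · = k)).trans <|
      Equiv.subtypeEquivRight fun q => ?_
  simp only [IsPlanePartition, weight, and_assoc]
end
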